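/- arXiv:1110.6199 — 9 statements merged into one kernel-verified Lean document; each statement's English description precedes it below -/
import Mathlib

section
/- Every nonzero codeword of the simplex code has Hamming weight exactly 2^{b−1}: for every X ∈ K with X ≠ 0, the number of c ∈ V* with Φ_E(X)(c) = 1 equals 2^{b−1}. -/
/-!
`Φ_E X c` is the dot product `c ⬝ᵥ Φ_B X`, and `Φ_B X ≠ 0`. A nonzero linear functional on
`𝔽_q^n` is onto, so its fibres are cosets of its kernel and all have `q^(n-1)` elements; the fibre
over `1` does not contain `c = 0`, so restricting to `V*` loses nothing.
-/

open Finset Matrix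

theorem AddMonoidHom.card_mul_card_fiber_of_surjective {G M : Type*} [AddGroup G] [Fintype G]
    [AddMonoid M] [Fintype M] [DecidableEq M] {f : G →+ M} (hf : Function.Surjective f) (y : M) :
    Fintype.card M * #{g | f g = y} = Fintype.card G := by
  calc Fintype.card M * #{g | f g = y}
      = ∑ x : M, #{g | f g = x} :=
        (sum_const_nat fun x _ ↦ card_fiber_eq_of_mem_range f (hf x) (hf y)).symm
    _ = Fintype.card G := (card_eq_sum_card_fiberwise fun _ _ ↦ mem_univ _).symm

theorem Matrix.surjective_dotProduct_left {ι F : Type*} [Fintype ι] [DecidableEq ι]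
    [DivisionRing F] {w : ι → F} (hw : w ≠ 0) : Function.Surjective (· ⬝ᵥ w) := by
  obtain ⟨i, hi⟩ := Function.ne_iff.mp hw
  intro a
  exact ⟨Pi.single i (a / w i), by simp [single_dotProduct, div_mul_cancel₀ a hi]⟩

theorem Matrix.card_dotProduct_left_eq {ι F : Type*} [Fintype ι] [DivisionRing F] [Fintype F]
    {w : ι → F} (hw : w ≠ 0) (a : F) :
    Nat.card {v : ι → F // v ⬝ᵥ w = a} = Fintype.card F ^ (Fintype.card ι - 1) := by
  classical
  let f : (ι → F) →+ F := AddMonoidHom.mk' (· ⬝ᵥ w) fun u v ↦ add_dotProduct u v w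
  have hfiber := AddMonoidHom.card_mul_card_fiber_of_surjective (f := f)
    (surjective_dotProduct_left hw) a
  have hι : Fintype.card ι ≠ 0 := by
    obtain ⟨i, -⟩ := Function.ne_iff.mp hw
    exact (Fintype.card_pos_iff.mpr ⟨i⟩).ne'
  rw [Fintype.card_fun, ← Nat.sub_one_add_one hι, pow_succ'] at hfiber
  rw [Nat.card_eq_fintype_card, Fintype.card_subtype]
  exact Nat.eq_of_mul_eq_mul_left Fintype.card_pos hfiber

theorem simplex_nonzero_codeword_weight_general (b : ℕ)
    (ΦB : GaloisField 2 b ≃ₗ[ZMod 2] (Fin b → ZMod 2))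
    (ΦE : GaloisField 2 b → ({v : Fin b → ZMod 2 // v ≠ 0} → ZMod 2))
    (hΦE : ∀ (X : GaloisField 2 b) (c : {v : Fin b → ZMod 2 // v ≠ 0}),
      ΦE X c = ∑ e : Fin b, (c : Fin b → ZMod 2) e * ΦB X e)
    (X : GaloisField 2 b) (hX : X ≠ 0) :
    Nat.card {c : {v : Fin b → ZMod 2 // v ≠ 0} // ΦE X c = 1} = 2 ^ (b - 1) := by
  have hw : ΦB X ≠ 0 := (map_ne_zero_iff ΦB ΦB.injective).mpr hX
  have hne : ∀ {v : Fin b → ZMod 2}, v ⬝ᵥ ΦB X = 1 → v ≠ 0 := by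
    rintro v hv rfl
    simp at hv
  calc Nat.card {c : {v : Fin b → ZMod 2 // v ≠ 0} // ΦE X c = 1}
      = Nat.card {v : Fin b → ZMod 2 // v ⬝ᵥ ΦB X = 1} :=
        Nat.card_congr <| (Equiv.subtypeEquivRight fun c ↦ by rw [hΦE]; rfl).trans
          (Equiv.subtypeSubtypeEquivSubtype hne)
    _ = 2 ^ (b - 1) := by rw [card_dotProduct_left_eq hw, ZMod.card, Fintype.card_fin]

/-- Every nonzero codeword of the simplex code has Hamming weight exactly
`2^(b-1)`: for every `X ∈ K` with `X ≠ 0`, the number of `c ∈ V*` with `Φ_E X c = 1`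
equals `2^(b-1)`. -/
theorem simplex_nonzero_codeword_weight (b : ℕ) (hb : 1 ≤ b)
    (ΦB : GaloisField 2 b ≃ₗ[ZMod 2] (Fin b → ZMod 2))
    (ΦE : GaloisField 2 b → ({v : Fin b → ZMod 2 // v ≠ 0} → ZMod 2))
    (hΦE : ∀ (X : GaloisField 2 b) (c : {v : Fin b → ZMod 2 // v ≠ 0}),
      ΦE X c = ∑ e : Fin b, (c : Fin b → ZMod 2) e * ΦB X e)
    (X : GaloisField 2 b) (hX : X ≠ 0) :
    Nat.card {c : {v : Fin b → ZMod 2 // v ≠ 0} // ΦE X c = 1} = 2 ^ (b - 1) :=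
  simplex_nonzero_codeword_weight_general b ΦB ΦE hΦE X hX
end

section
/- A vector y : V* → ZMod 2 belongs to the simplex code C_S(b) if and only if y(c₁) + y(c₂) + y(c₁ + c₂) = 0 for all distinct c₁, c₂ ∈ V* with c₁ + c₂ ≠ 0. In other words, the simplex code is exactly the kernel of the parity-check matrix whose rows are all such weight-3 checks. -/
/-!
Over `ZMod 2`, a function on the nonzero vectors satisfies all weight-3 checks exactly when its
extension by zero is additive, i.e. when it is the restriction of a linear functional; and the
codewords `Φ_E X` are precisely the restrictions of the functionals `c ↦ c ⬝ᵥ Φ_B X`, which by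
duality are all linear functionals on `V`.
-/

section ExtendByZero

variable {W M : Type*} [Zero W] [Zero M]

open Classical in
noncomputable def extendByZero (y : {w : W // w ≠ 0} → M) (w : W) : M :=
  if h : w = 0 then 0 else y ⟨w, h⟩

lemma extendByZero_zero (y : {w : W // w ≠ 0} → M) : extendByZero y 0 = 0 :=
  dif_pos rfl

lemma extendByZero_of_ne (y : {w : W // w ≠ 0} → M) {w : W} (hw : w ≠ 0) :
    extendByZero y w = y ⟨w, hw⟩ :=
  dif_neg hw

end ExtendByZero

namespace ZModModule

variable {W M : Type*} [AddCommGroup W] [Module (ZMod 2) W] [AddCommGroup M] [Module (ZMod 2) M]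

lemma add_eq_zero_iff_eq {x y : W} : x + y = 0 ↔ x = y := by
  rw [add_eq_zero_iff_eq_neg, neg_eq_self]

lemma extendByZero_add {y : {w : W // w ≠ 0} → M}
    (hy : ∀ (u v : {w : W // w ≠ 0}) (hs : (u : W) + v ≠ 0), y u + y v + y ⟨_, hs⟩ = 0)
    (u v : W) : extendByZero y (u + v) = extendByZero y u + extendByZero y v := by
  by_cases hu : u = 0
  · rw [hu, zero_add, extendByZero_zero, zero_add]
  by_cases hv : v = 0
  · rw [hv, add_zero, extendByZero_zero, add_zero]
  by_cases hs : u + v = 0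
  · obtain rfl := add_eq_zero_iff_eq.mp hs
    rw [hs, extendByZero_zero, add_self]
  · rw [extendByZero_of_ne y hs, extendByZero_of_ne y hu, extendByZero_of_ne y hv,
      eq_neg_of_add_eq_zero_right (hy ⟨u, hu⟩ ⟨v, hv⟩ hs), neg_eq_self]

theorem exists_linearMap_comp_val_eq_iff (y : {w : W // w ≠ 0} → M) :
    (∃ g : W →ₗ[ZMod 2] M, g ∘ Subtype.val = y) ↔
      ∀ (u v : {w : W // w ≠ 0}) (hs : (u : W) + v ≠ 0), y u + y v + y ⟨_, hs⟩ = 0 := by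
  constructor
  · rintro ⟨g, rfl⟩ u v _
    simp only [Function.comp_apply, map_add, add_self]
  · intro hy
    exact ⟨(AddMonoidHom.mk' (extendByZero y) (extendByZero_add hy)).toZModLinearMap 2,
      funext fun w ↦ extendByZero_of_ne y w.2⟩

end ZModModule

theorem simplex_code_eq_kernel_of_weight_three_checks_general (b : ℕ)
    (ΦB : GaloisField 2 b ≃ₗ[ZMod 2] (Fin b → ZMod 2))
    (ΦE : GaloisField 2 b → ({v : Fin b → ZMod 2 // v ≠ 0} → ZMod 2))
    (hΦE : ∀ (X : GaloisField 2 b) (c : {v : Fin b → ZMod 2 // v ≠ 0}),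
      ΦE X c = ∑ e : Fin b, (c : Fin b → ZMod 2) e * ΦB X e)
    (y : {v : Fin b → ZMod 2 // v ≠ 0} → ZMod 2) :
    y ∈ Set.range ΦE ↔
      ∀ (c₁ c₂ : {v : Fin b → ZMod 2 // v ≠ 0}) (_ : c₁ ≠ c₂)
        (hs : (c₁ : Fin b → ZMod 2) + (c₂ : Fin b → ZMod 2) ≠ 0),
        y c₁ + y c₂ + y ⟨(c₁ : Fin b → ZMod 2) + (c₂ : Fin b → ZMod 2), hs⟩ = 0 := by
  have hΦE_eq : ∀ X, ΦE X = dotProductEquiv (ZMod 2) (Fin b) (ΦB X) ∘ Subtype.val :=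
    fun X ↦ funext fun c ↦ (hΦE X c).trans (dotProduct_comm _ _)
  have hrange : y ∈ Set.range ΦE ↔
      ∃ g : (Fin b → ZMod 2) →ₗ[ZMod 2] ZMod 2, g ∘ Subtype.val = y := by
    simp only [Set.mem_range, hΦE_eq]
    exact ((ΦB.trans (dotProductEquiv (ZMod 2) (Fin b))).surjective.exists
      (p := fun g ↦ ⇑g ∘ Subtype.val = y)).symm
  rw [hrange, ZModModule.exists_linearMap_comp_val_eq_iff]
  refine ⟨fun h c₁ c₂ _ ↦ h c₁ c₂, fun h c₁ c₂ hs ↦ h c₁ c₂ ?_ hs⟩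
  rintro rfl
  exact hs (ZModModule.add_self _)

/-- A vector `y : V* → ZMod 2` belongs to the simplex code
`C_S(b) = range Φ_E` if and only if `y c₁ + y c₂ + y (c₁ + c₂) = 0` for all distinct
`c₁, c₂ ∈ V*` with `c₁ + c₂ ≠ 0`; i.e. the simplex code is exactly the kernel of the
parity-check matrix whose rows are all such weight-3 checks. -/
theorem simplex_code_eq_kernel_of_weight_three_checks (b : ℕ) (hb : 1 ≤ b)
    (ΦB : GaloisField 2 b ≃ₗ[ZMod 2] (Fin b → ZMod 2))
    (ΦE : GaloisField 2 b → ({v : Fin b → ZMod 2 // v ≠ 0} → ZMod 2))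
    (hΦE : ∀ (X : GaloisField 2 b) (c : {v : Fin b → ZMod 2 // v ≠ 0}),
      ΦE X c = ∑ e : Fin b, (c : Fin b → ZMod 2) e * ΦB X e)
    (y : {v : Fin b → ZMod 2 // v ≠ 0} → ZMod 2) :
    y ∈ Set.range ΦE ↔
      ∀ (c₁ c₂ : {v : Fin b → ZMod 2 // v ≠ 0}) (_ : c₁ ≠ c₂)
        (hs : (c₁ : Fin b → ZMod 2) + (c₂ : Fin b → ZMod 2) ≠ 0),
        y c₁ + y c₂ + y ⟨(c₁ : Fin b → ZMod 2) + (c₂ : Fin b → ZMod 2), hs⟩ = 0 :=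
  simplex_code_eq_kernel_of_weight_three_checks_general b ΦB ΦE hΦE y
end

section
/- The ZMod 2-linear span of the weight-3 vectors e_{c₁} + e_{c₂} + e_{c₁+c₂}, taken over all distinct c₁, c₂ ∈ V* with c₁ + c₂ ≠ 0 (where e_c : V* → ZMod 2 is the indicator function of c), equals the dual code of the simplex code, i.e., the set of all y : V* → ZMod 2 with Σ_{c ∈ V*} y(c)·z(c) = 0 for every z ∈ C_S(b). -/
/-!
Let `σ y = ∑_c y c • c` be the syndrome map `(V* → 𝔽₂) → V`. Each weight-three check has
syndrome `c₁ + c₂ + (c₁ + c₂) = 0`. Conversely, modulo the span `W` of the checks we have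
`e_{u+v} ≡ e_u + e_v`, so `v ↦ [e_v]` (with `0 ↦ 0`) is additive, hence `𝔽₂`-linear, and
checking on indicators shows that the class `[y]` is the image of `σ y`; so `σ y = 0` forces
`y ∈ W`. Finally `∑_c y c * Φ_E(X)(c) = σ y ⬝ᵥ Φ_B X`, and `Φ_B` is onto, so the dual of the simplex
code is exactly `ker σ`.
-/

open Submodule

section WeightThreeChecks

variable (V : Type*) [AddCommGroup V] [Module (ZMod 2) V] [DecidableEq V]

def weightThreeChecks : Set ({v : V // v ≠ 0} → ZMod 2) :=
  {y | ∃ (c₁ c₂ : {v : V // v ≠ 0}) (_ : c₁ ≠ c₂) (hs : (c₁ : V) + c₂ ≠ 0),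
    y = Pi.single c₁ 1 + Pi.single c₂ 1 + Pi.single ⟨(c₁ : V) + c₂, hs⟩ 1}

variable {V}

noncomputable def singleClass (v : V) :
    ({v : V // v ≠ 0} → ZMod 2) ⧸ span (ZMod 2) (weightThreeChecks V) :=
  if h : v = 0 then 0 else mkQ _ (Pi.single ⟨v, h⟩ 1)

theorem singleClass_add (u v : V) : singleClass (u + v) = singleClass u + singleClass v := by
  by_cases hu : u = 0
  · simp [hu, singleClass]
  by_cases hv : v = 0
  · simp [hv, singleClass]
  by_cases huv : u + v = 0
  · obtain rfl : u = v := sub_eq_zero.mp (by rwa [ZModModule.sub_eq_add])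
    simp [huv, ZModModule.add_self, singleClass]
  have hne : (⟨u, hu⟩ : {v : V // v ≠ 0}) ≠ ⟨v, hv⟩ := by
    rintro ⟨⟩
    exact huv (ZModModule.add_self u)
  have hcheck := (Quotient.mk_eq_zero (span (ZMod 2) (weightThreeChecks V))).mpr
    (subset_span ⟨⟨u, hu⟩, ⟨v, hv⟩, hne, huv, rfl⟩)
  rw [Quotient.mk_add, Quotient.mk_add] at hcheck
  simp only [singleClass, dif_neg hu, dif_neg hv, dif_neg huv, mkQ_apply]
  rw [eq_neg_of_add_eq_zero_right hcheck, ZModModule.neg_eq_self]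

noncomputable def singleClassHom :
    V →ₗ[ZMod 2] ({v : V // v ≠ 0} → ZMod 2) ⧸ span (ZMod 2) (weightThreeChecks V) :=
  (AddMonoidHom.mk' singleClass singleClass_add).toZModLinearMap 2

variable [Fintype V]

theorem mkQ_span_weightThreeChecks :
    (span (ZMod 2) (weightThreeChecks V)).mkQ =
      singleClassHom ∘ₗ Fintype.linearCombination (ZMod 2) ((↑) : {v : V // v ≠ 0} → V) := by
  refine LinearMap.pi_ext' fun c => LinearMap.ext_ring ?_
  simp [Fintype.linearCombination_apply_single, singleClassHom, singleClass, c.2]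

theorem weightThreeChecks_subset_ker :
    weightThreeChecks V ⊆
      LinearMap.ker (Fintype.linearCombination (ZMod 2) ((↑) : {v : V // v ≠ 0} → V)) := by
  rintro _ ⟨c₁, c₂, -, hs, rfl⟩
  simp [Fintype.linearCombination_apply_single, ZModModule.add_self]

theorem span_weightThreeChecks_eq_ker :
    span (ZMod 2) (weightThreeChecks V) =
      LinearMap.ker (Fintype.linearCombination (ZMod 2) ((↑) : {v : V // v ≠ 0} → V)) := by
  refine le_antisymm (span_le.mpr weightThreeChecks_subset_ker) ?_
  rw [← ker_mkQ (span (ZMod 2) (weightThreeChecks V)), mkQ_span_weightThreeChecks]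
  exact LinearMap.ker_le_ker_comp _ _

end WeightThreeChecks

theorem Fintype.linearCombination_dotProduct {α ι R : Type*} [Fintype α] [Fintype ι]
    [CommSemiring R] (v : α → ι → R) (y : α → R) (w : ι → R) :
    Fintype.linearCombination R v y ⬝ᵥ w = ∑ a, y a * (v a ⬝ᵥ w) := by
  simp [Fintype.linearCombination_apply, sum_dotProduct, smul_dotProduct]

theorem span_weight_three_checks_eq_dual_of_simplex_general (b : ℕ)
    (ΦB : GaloisField 2 b ≃ₗ[ZMod 2] (Fin b → ZMod 2))
    (ΦE : GaloisField 2 b → ({v : Fin b → ZMod 2 // v ≠ 0} → ZMod 2))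
    (hΦE : ∀ (X : GaloisField 2 b) (c : {v : Fin b → ZMod 2 // v ≠ 0}),
      ΦE X c = ∑ e : Fin b, (c : Fin b → ZMod 2) e * ΦB X e) :
    (Submodule.span (ZMod 2)
        {y : {v : Fin b → ZMod 2 // v ≠ 0} → ZMod 2 |
          ∃ (c₁ c₂ : {v : Fin b → ZMod 2 // v ≠ 0}) (_ : c₁ ≠ c₂)
            (hs : (c₁ : Fin b → ZMod 2) + (c₂ : Fin b → ZMod 2) ≠ 0),
            y = Pi.single c₁ 1 + Pi.single c₂ 1 +
              Pi.single (⟨(c₁ : Fin b → ZMod 2) + (c₂ : Fin b → ZMod 2), hs⟩ :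
                {v : Fin b → ZMod 2 // v ≠ 0}) 1} :
      Set ({v : Fin b → ZMod 2 // v ≠ 0} → ZMod 2)) =
    {y : {v : Fin b → ZMod 2 // v ≠ 0} → ZMod 2 |
      ∀ z ∈ Set.range ΦE, ∑ c : {v : Fin b → ZMod 2 // v ≠ 0}, y c * z c = 0} := by
  have hΦE' : ∀ X c, ΦE X c = (c : Fin b → ZMod 2) ⬝ᵥ ΦB X := hΦE
  ext y
  change y ∈ span (ZMod 2) (weightThreeChecks _) ↔ _
  simp only [span_weightThreeChecks_eq_ker, LinearMap.mem_ker, Set.mem_ofPred_eq,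
    Set.forall_mem_range, hΦE', ← Fintype.linearCombination_dotProduct]
  exact (ΦB.surjective.forall.symm.trans dotProduct_eq_zero_iff).symm

/-- The `ZMod 2`-linear span of the weight-3 vectors
`e_{c₁} + e_{c₂} + e_{c₁+c₂}` (over all distinct `c₁, c₂ ∈ V*` with `c₁ + c₂ ≠ 0`)
equals the dual code of the simplex code, i.e. the set of all `y : V* → ZMod 2` with
`∑_{c ∈ V*} y c * z c = 0` for every `z ∈ C_S(b) = range Φ_E`. -/
theorem span_weight_three_checks_eq_dual_of_simplex (b : ℕ) (hb : 1 ≤ b)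
    (ΦB : GaloisField 2 b ≃ₗ[ZMod 2] (Fin b → ZMod 2))
    (ΦE : GaloisField 2 b → ({v : Fin b → ZMod 2 // v ≠ 0} → ZMod 2))
    (hΦE : ∀ (X : GaloisField 2 b) (c : {v : Fin b → ZMod 2 // v ≠ 0}),
      ΦE X c = ∑ e : Fin b, (c : Fin b → ZMod 2) e * ΦB X e) :
    (Submodule.span (ZMod 2)
        {y : {v : Fin b → ZMod 2 // v ≠ 0} → ZMod 2 |
          ∃ (c₁ c₂ : {v : Fin b → ZMod 2 // v ≠ 0}) (_ : c₁ ≠ c₂)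
            (hs : (c₁ : Fin b → ZMod 2) + (c₂ : Fin b → ZMod 2) ≠ 0),
            y = Pi.single c₁ 1 + Pi.single c₂ 1 +
              Pi.single (⟨(c₁ : Fin b → ZMod 2) + (c₂ : Fin b → ZMod 2), hs⟩ :
                {v : Fin b → ZMod 2 // v ≠ 0}) 1} :
      Set ({v : Fin b → ZMod 2 // v ≠ 0} → ZMod 2)) =
    {y : {v : Fin b → ZMod 2 // v ≠ 0} → ZMod 2 |
      ∀ z ∈ Set.range ΦE, ∑ c : {v : Fin b → ZMod 2 // v ≠ 0}, y c * z c = 0} :=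
  span_weight_three_checks_eq_dual_of_simplex_general b ΦB ΦE hΦE
end

section
/- (Lemma 1) For every h ∈ K with h ≠ 0, the map σ_h : V* → V* given by σ_h(c) = (Ψ_m(h))ᵀ *ᵥ c is a well-defined bijection of V*, and Φ_E(h·X)(c) = Φ_E(X)(σ_h(c)) for all X ∈ K and all c ∈ V*. Equivalently, the matrix Ψ_M(h) satisfying Ψ_M(h) *ᵥ Φ_E(X) = Φ_E(h·X) for all X is a permutation matrix. -/
open Matrix

/-!
Multiplication by `h ≠ 0` is invertible on `K`, so its matrix `Ψ_m h`, and with it `(Ψ_m h)ᵀ`, is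
invertible and therefore permutes the nonzero vectors. The adjunction
`c ⬝ᵥ (Ψ_m h *ᵥ Φ_B X) = ((Ψ_m h)ᵀ *ᵥ c) ⬝ᵥ Φ_B X` moves the factor `h` from the argument of `Φ_E`
onto the index `c`.
-/

section MulMatrix

variable {K R n : Type*} [Monoid K] [CommRing R] [Fintype n] [DecidableEq n]
  {e : K ≃ (n → R)} {Ψ : K → Matrix n n R}

def mulMatrixHom (hΨ : ∀ h x, Ψ h *ᵥ e x = e (h * x)) : K →* Matrix n n R where
  toFun := Ψ
  map_one' := ext_iff_mulVec.2 fun v => by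
    rw [← e.apply_symm_apply v, hΨ, one_mul, one_mulVec]
  map_mul' g g' := ext_iff_mulVec.2 fun v => by
    rw [← e.apply_symm_apply v, ← mulVec_mulVec, hΨ, hΨ, hΨ, mul_assoc]

theorem isUnit_of_mulVec_eq_mul (hΨ : ∀ h x, Ψ h *ᵥ e x = e (h * x)) {h : K} (hh : IsUnit h) :
    IsUnit (Ψ h) :=
  hh.map (mulMatrixHom hΨ)

end MulMatrix

namespace Matrix

variable {n R : Type*} [Fintype n] [DecidableEq n] [CommRing R]

noncomputable def nonzeroMulVecEquiv (A : Matrix n n R) (hA : IsUnit A) :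
    {v : n → R // v ≠ 0} ≃ {v : n → R // v ≠ 0} :=
  (Equiv.ofBijective A.mulVec
    ⟨mulVec_injective_of_isUnit hA, mulVec_surjective_iff_isUnit.2 hA⟩).subtypeEquiv
    fun _ => ((mulVec_injective_of_isUnit hA).ne_iff' (mulVec_zero A)).symm

end Matrix

theorem extended_binary_multiplication_is_permutation_general (b : ℕ)
    (ΦB : GaloisField 2 b ≃ₗ[ZMod 2] (Fin b → ZMod 2))
    (Ψm : GaloisField 2 b → Matrix (Fin b) (Fin b) (ZMod 2))
    (hΨm : ∀ (h x : GaloisField 2 b), Ψm h *ᵥ ΦB x = ΦB (h * x))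
    (ΦE : GaloisField 2 b → ({v : Fin b → ZMod 2 // v ≠ 0} → ZMod 2))
    (hΦE : ∀ (X : GaloisField 2 b) (c : {v : Fin b → ZMod 2 // v ≠ 0}),
      ΦE X c = ∑ e : Fin b, (c : Fin b → ZMod 2) e * ΦB X e)
    (h : GaloisField 2 b) (hh : h ≠ 0) :
    ∃ σ : {v : Fin b → ZMod 2 // v ≠ 0} → {v : Fin b → ZMod 2 // v ≠ 0},
      Function.Bijective σ ∧
      (∀ c : {v : Fin b → ZMod 2 // v ≠ 0},
        (σ c : Fin b → ZMod 2) = (Ψm h)ᵀ *ᵥ (c : Fin b → ZMod 2)) ∧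
      (∀ (X : GaloisField 2 b) (c : {v : Fin b → ZMod 2 // v ≠ 0}),
        ΦE (h * X) c = ΦE X (σ c)) := by
  have hunit : IsUnit (Ψm h)ᵀ :=
    (isUnit_transpose _).2 (isUnit_of_mulVec_eq_mul (e := ΦB.toEquiv) hΨm hh.isUnit)
  refine ⟨(Ψm h)ᵀ.nonzeroMulVecEquiv hunit, Equiv.bijective _, fun _ => rfl, fun X c => ?_⟩
  rw [hΦE, hΦE, ← hΨm]
  change (c : Fin b → ZMod 2) ⬝ᵥ (Ψm h *ᵥ ΦB X) = ((Ψm h)ᵀ *ᵥ (c : Fin b → ZMod 2)) ⬝ᵥ ΦB X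
  rw [dotProduct_mulVec, mulVec_transpose]

/-- **Lemma 1.** For every `h ≠ 0` the map `σ_h : V* → V*`,
`σ_h c = (Ψ_m h)ᵀ *ᵥ c`, is a well-defined bijection of `V*`, and
`Φ_E (h * X) c = Φ_E X (σ_h c)` for all `X` and `c`; i.e. the matrix `Ψ_M h` with
`Ψ_M h *ᵥ Φ_E X = Φ_E (h * X)` is a permutation matrix. -/
theorem extended_binary_multiplication_is_permutation (b : ℕ) (hb : 1 ≤ b)
    (ΦB : GaloisField 2 b ≃ₗ[ZMod 2] (Fin b → ZMod 2))
    (Ψm : GaloisField 2 b → Matrix (Fin b) (Fin b) (ZMod 2))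
    (hΨm : ∀ (h x : GaloisField 2 b), Ψm h *ᵥ ΦB x = ΦB (h * x))
    (ΦE : GaloisField 2 b → ({v : Fin b → ZMod 2 // v ≠ 0} → ZMod 2))
    (hΦE : ∀ (X : GaloisField 2 b) (c : {v : Fin b → ZMod 2 // v ≠ 0}),
      ΦE X c = ∑ e : Fin b, (c : Fin b → ZMod 2) e * ΦB X e)
    (h : GaloisField 2 b) (hh : h ≠ 0) :
    ∃ σ : {v : Fin b → ZMod 2 // v ≠ 0} → {v : Fin b → ZMod 2 // v ≠ 0},
      Function.Bijective σ ∧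
      (∀ c : {v : Fin b → ZMod 2 // v ≠ 0},
        (σ c : Fin b → ZMod 2) = (Ψm h)ᵀ *ᵥ (c : Fin b → ZMod 2)) ∧
      (∀ (X : GaloisField 2 b) (c : {v : Fin b → ZMod 2 // v ≠ 0}),
        ΦE (h * X) c = ΦE X (σ c)) :=
  extended_binary_multiplication_is_permutation_general b ΦB Ψm hΨm ΦE hΦE h hh
end

section
/- For x : Fin n × V* → ZMod 2, one has H_E *ᵥ x = 0 if and only if there exists X : Fin n → K with H_q *ᵥ X = 0 and x(j,c) = Φ_E(X j)(c) for all j ∈ Fin n and c ∈ V*. In other words, the extended binary image C_E (the blockwise Φ_E image of the nullspace of H_q) equals the intersection of the nullspace of H_PM with the n-fold product of simplex codes, which is the nullspace of H_E. -/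
open Matrix

/-!
Extend each block `x (j, ·)` by `0` at the zero vector to `g j : V → ZMod 2`. The simplex rows
say `g j c₁ + g j c₂ + g j (c₁ + c₂) = 0`; since `g j 0 = 0` and `V` has characteristic two,
this is additivity of `g j`, i.e. `g j = (· ⬝ᵥ w j)` for some `w j = Φ_B (X j)`. For such `x`
the `H_PM` row `(i, c)` equals `∑ j, (Ψ_m (H_q i j)ᵀ *ᵥ c) ⬝ᵥ Φ_B (X j) = c ⬝ᵥ Φ_B ((H_q *ᵥ X) i)`
because `Ψ_m` represents multiplication, and these vanish for all `c ≠ 0` iff `H_q *ᵥ X = 0`.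
-/

section ExtendZero

variable {V R : Type*} [Zero V] [DecidableEq V] [Zero R]

def extendZero (y : {v : V // v ≠ 0} → R) (v : V) : R :=
  if h : v = 0 then 0 else y ⟨v, h⟩

@[simp]
theorem extendZero_zero (y : {v : V // v ≠ 0} → R) : extendZero y 0 = 0 := dif_pos rfl

@[simp]
theorem extendZero_val (y : {v : V // v ≠ 0} → R) (c : {v : V // v ≠ 0}) :
    extendZero y c = y c := dif_neg c.2

theorem extendZero_eq_iff {y : {v : V // v ≠ 0} → R} {f : V → R} (hf : f 0 = 0) :
    extendZero y = f ↔ ∀ c, y c = f c := by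
  refine ⟨fun h c => by rw [← h, extendZero_val], fun h => funext fun v => ?_⟩
  by_cases hv : v = 0
  · rw [hv, extendZero_zero, hf]
  · exact (extendZero_val y ⟨v, hv⟩).trans (h _)

theorem sum_subtype_ne_zero [Fintype V] {M : Type*} [AddCommMonoid M] (f : V → M)
    (hf : f 0 = 0) : ∑ c : {v : V // v ≠ 0}, f c = ∑ v, f v := by
  rw [← Finset.sum_subtype {v | v ≠ 0} (fun v => by simp) f]
  exact Finset.sum_filter_of_ne fun v _ h hv => h (hv ▸ hf)

theorem sum_ite_eq_sum_filter_extendZero [Fintype V] {M : Type*} [AddCommMonoid M]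
    (y : {v : V // v ≠ 0} → M) (P : V → Prop) [DecidablePred P] :
    ∑ c : {v : V // v ≠ 0}, (if P c then y c else 0) = ∑ v with P v, extendZero y v := by
  rw [Finset.sum_filter,
    ← sum_subtype_ne_zero (fun v => if P v then extendZero y v else 0) (by simp)]
  simp only [extendZero_val]

end ExtendZero

section Simplex

theorem add_add_eq_zero_iff_map_add {V M : Type*} [AddCommGroup V] [Module (ZMod 2) V]
    [AddCommGroup M] [Module (ZMod 2) M] {g : V → M} (hg : g 0 = 0) :
    (∀ c₁ c₂ : {v : V // v ≠ 0}, c₁ ≠ c₂ → g c₁ + g c₂ + g (c₁ + c₂ : V) = 0) ↔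
      ∀ u v, g (u + v) = g u + g v := by
  constructor
  · intro h u v
    by_cases hu : u = 0
    · rw [hu, zero_add, hg, zero_add]
    by_cases hv : v = 0
    · rw [hv, add_zero, hg, add_zero]
    by_cases huv : u = v
    · rw [huv, ZModModule.add_self, ZModModule.add_self, hg]
    have := h ⟨u, hu⟩ ⟨v, hv⟩ (fun h => huv (congrArg Subtype.val h))
    exact (add_eq_zero_iff_eq_neg'.1 this).trans (ZModModule.neg_eq_self _)
  · intro h c₁ c₂ _
    rw [h, ZModModule.add_self]

theorem map_add_iff_exists_eq_dotProduct {ι : Type*} [Fintype ι] [DecidableEq ι]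
    {g : (ι → ZMod 2) → ZMod 2} :
    (∀ u v, g (u + v) = g u + g v) ↔ ∃ w, g = (· ⬝ᵥ w) := by
  constructor
  · intro h
    let f := (AddMonoidHom.mk' g h).toZModLinearMap 2
    refine ⟨(dotProductEquiv (ZMod 2) ι).symm f, funext fun v => ?_⟩
    rw [dotProduct_comm]
    exact (LinearMap.congr_fun ((dotProductEquiv (ZMod 2) ι).apply_symm_apply f) v).symm
  · rintro ⟨w, rfl⟩ u v
    exact add_dotProduct u v w

end Simplex

section Rows

variable {V : Type*} [DecidableEq V] [Fintype V]

theorem mulVec_apply_eq_sum_ite_of_eq_one_iff {α β : Type*} [Fintype β]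
    (M : Matrix α β (ZMod 2)) (x : β → ZMod 2) {r : α} {P : β → Prop} [DecidablePred P]
    (hM : ∀ p, M r p = 1 ↔ P p) : (M *ᵥ x) r = ∑ p, if P p then x p else 0 := by
  simp only [mulVec, dotProduct]
  refine Finset.sum_congr rfl fun p _ => ?_
  have entry : M r p = if P p then 1 else 0 := by
    split_ifs with hp
    · exact (hM p).2 hp
    · exact ((by decide : ∀ a : ZMod 2, a = 1 ∨ a = 0) _).resolve_left (mt (hM p).1 hp)
  rw [entry, ite_mul, one_mul, zero_mul]

theorem mulVec_apply_eq_sum_extendZero [Zero V] {α β : Type*} [Fintype β]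
    (M : Matrix α (β × {v : V // v ≠ 0}) (ZMod 2)) (x : β × {v : V // v ≠ 0} → ZMod 2)
    {r : α} {A : β → Prop} [DecidablePred A] {u : β → V}
    (hM : ∀ j c, M r (j, c) = 1 ↔ A j ∧ (c : V) = u j) :
    (M *ᵥ x) r = ∑ j, if A j then extendZero (fun c => x (j, c)) (u j) else 0 := by
  rw [mulVec_apply_eq_sum_ite_of_eq_one_iff M x (P := fun p => A p.1 ∧ (p.2 : V) = u p.1)
    fun p => hM p.1 p.2, Fintype.sum_prod_type]
  refine Finset.sum_congr rfl fun j _ => ?_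
  rw [sum_ite_eq_sum_filter_extendZero (fun c => x (j, c)) fun v => A j ∧ v = u j]
  by_cases hj : A j <;> simp [hj, Finset.filter_eq']

theorem mulVec_apply_eq_extendZero_add_add [AddCommGroup V] [Module (ZMod 2) V] {α β : Type*}
    [Fintype β] [DecidableEq β] (M : Matrix α (β × {v : V // v ≠ 0}) (ZMod 2))
    (x : β × {v : V // v ≠ 0} → ZMod 2) {r : α} {j₀ : β} {c₁ c₂ : {v : V // v ≠ 0}}
    (hM : ∀ j c, M r (j, c) = 1 ↔ j = j₀ ∧ c₁ ≠ c₂ ∧ (c₁ + c₂ : V) ≠ 0 ∧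
      (c = c₁ ∨ c = c₂ ∨ (c : V) = c₁ + c₂)) :
    (M *ᵥ x) r = if c₁ = c₂ then 0 else
      extendZero (fun c => x (j₀, c)) c₁ + extendZero (fun c => x (j₀, c)) c₂ +
        extendZero (fun c => x (j₀, c)) ((c₁ : V) + c₂) := by
  split_ifs with h12
  · rw [mulVec_apply_eq_sum_ite_of_eq_one_iff M x fun p => hM p.1 p.2]
    simp [h12]
  have hsum : (c₁ + c₂ : V) ≠ 0 := fun h =>
    h12 (Subtype.ext ((add_eq_zero_iff_eq_neg.1 h).trans (ZModModule.neg_eq_self _)))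
  have hM' : ∀ j c, M r (j, c) = 1 ↔ j = j₀ ∧
      (c : V) ∈ ({c₁.1, c₂.1, c₁.1 + c₂.1} : Finset _) := fun j c => by
    simp [hM, h12, hsum, Subtype.ext_iff]
  have h1 : (c₁ : V) ∉ ({c₂.1, c₁.1 + c₂.1} : Finset _) := by
    simp [Subtype.val_injective.ne h12, c₂.2]
  have h2 : (c₂ : V) ∉ ({c₁.1 + c₂.1} : Finset _) := by
    simp [c₁.2]
  rw [mulVec_apply_eq_sum_ite_of_eq_one_iff M x fun p => hM' p.1 p.2, Fintype.sum_prod_type,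
    Finset.sum_eq_single j₀ (fun j _ hj => by simp [hj]) (by simp)]
  simp only [true_and]
  rw [sum_ite_eq_sum_filter_extendZero (fun c => x (j₀, c)), Finset.filter_univ_mem,
    Finset.sum_insert h1, Finset.sum_insert h2, Finset.sum_singleton, add_assoc]

end Rows

theorem forall_ne_zero_dotProduct_eq_zero_iff {ι R : Type*} [Fintype ι] [CommSemiring R]
    {v : ι → R} : (∀ c : {c : ι → R // c ≠ 0}, (c : ι → R) ⬝ᵥ v = 0) ↔ v = 0 := by
  refine ⟨fun h => dotProduct_eq_zero v fun w => ?_, by rintro rfl c; exact dotProduct_zero _⟩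
  by_cases hw : w = 0
  · rw [hw, dotProduct_zero]
  · rw [dotProduct_comm]
    exact h ⟨w, hw⟩

theorem sum_ite_transpose_mulVec_dotProduct {ι κ μ R K F : Type*} [Fintype ι] [Fintype κ]
    [CommSemiring R] [NonUnitalNonAssocSemiring K] [DecidableEq K] [FunLike F K (ι → R)]
    [AddMonoidHomClass F K (ι → R)] (Φ : F) {Ψ : K → Matrix ι ι R}
    (hΨ : ∀ h y, Ψ h *ᵥ Φ y = Φ (h * y)) (A : Matrix μ κ K) (X : κ → K) (i : μ)
    (c : ι → R) :
    ∑ j, (if A i j ≠ 0 then ((Ψ (A i j))ᵀ *ᵥ c) ⬝ᵥ Φ (X j) else 0) =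
      c ⬝ᵥ Φ ((A *ᵥ X) i) := calc
  _ = ∑ j, c ⬝ᵥ Φ (A i j * X j) := Finset.sum_congr rfl fun j _ => by
        split_ifs with h
        · rw [mulVec_transpose, ← dotProduct_mulVec, hΨ]
        · rw [not_not.1 h, zero_mul, map_zero, dotProduct_zero]
  _ = c ⬝ᵥ Φ ((A *ᵥ X) i) := by rw [← dotProduct_sum, ← map_sum]; rfl

theorem extended_binary_image_eq_nullspace_general (b m n : ℕ)
    (ΦB : GaloisField 2 b ≃ₗ[ZMod 2] (Fin b → ZMod 2))
    (Ψm : GaloisField 2 b → Matrix (Fin b) (Fin b) (ZMod 2))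
    (hΨm : ∀ (h x : GaloisField 2 b), Ψm h *ᵥ ΦB x = ΦB (h * x))
    (ΦE : GaloisField 2 b → ({v : Fin b → ZMod 2 // v ≠ 0} → ZMod 2))
    (hΦE : ∀ (X : GaloisField 2 b) (c : {v : Fin b → ZMod 2 // v ≠ 0}),
      ΦE X c = ∑ e : Fin b, (c : Fin b → ZMod 2) e * ΦB X e)
    (Hq : Matrix (Fin m) (Fin n) (GaloisField 2 b))
    (HE : Matrix
      ((Fin m × {v : Fin b → ZMod 2 // v ≠ 0}) ⊕
        (Fin n × {v : Fin b → ZMod 2 // v ≠ 0} × {v : Fin b → ZMod 2 // v ≠ 0}))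
      (Fin n × {v : Fin b → ZMod 2 // v ≠ 0}) (ZMod 2))
    -- the `H_PM` rows of `H_E`:
    (hHPM : ∀ (i : Fin m) (c : {v : Fin b → ZMod 2 // v ≠ 0}) (j : Fin n)
        (c' : {v : Fin b → ZMod 2 // v ≠ 0}),
      HE (Sum.inl (i, c)) (j, c') = 1 ↔
        (Hq i j ≠ 0 ∧
          (c' : Fin b → ZMod 2) = (Ψm (Hq i j))ᵀ *ᵥ (c : Fin b → ZMod 2)))
    -- the simplex rows of `H_E`:
    (hHS : ∀ (j₀ : Fin n) (c₁ c₂ : {v : Fin b → ZMod 2 // v ≠ 0}) (j : Fin n)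
        (c' : {v : Fin b → ZMod 2 // v ≠ 0}),
      HE (Sum.inr (j₀, c₁, c₂)) (j, c') = 1 ↔
        (j = j₀ ∧ c₁ ≠ c₂ ∧ (c₁ : Fin b → ZMod 2) + (c₂ : Fin b → ZMod 2) ≠ 0 ∧
          (c' = c₁ ∨ c' = c₂ ∨
            (c' : Fin b → ZMod 2) = (c₁ : Fin b → ZMod 2) + (c₂ : Fin b → ZMod 2))))
    (x : Fin n × {v : Fin b → ZMod 2 // v ≠ 0} → ZMod 2) :
    HE *ᵥ x = 0 ↔
      ∃ X : Fin n → GaloisField 2 b, Hq *ᵥ X = 0 ∧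
        ∀ (j : Fin n) (c : {v : Fin b → ZMod 2 // v ≠ 0}), x (j, c) = ΦE (X j) c := by
  classical
  set g : Fin n → (Fin b → ZMod 2) → ZMod 2 := fun j => extendZero fun c => x (j, c)
  have hcode : ∀ X : Fin n → GaloisField 2 b,
      (∀ j c, x (j, c) = ΦE (X j) c) ↔ ∀ j, g j = (· ⬝ᵥ ΦB (X j)) := fun X =>
    forall_congr' fun j => by
      simp only [hΦE]
      exact (extendZero_eq_iff (f := (· ⬝ᵥ ΦB (X j))) (zero_dotProduct _)).symm
  have hPM : ∀ X : Fin n → GaloisField 2 b, (∀ j, g j = (· ⬝ᵥ ΦB (X j))) →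
      ∀ i c, (HE *ᵥ x) (.inl (i, c)) = (c : Fin b → ZMod 2) ⬝ᵥ ΦB ((Hq *ᵥ X) i) := by
    intro X hX i c
    rw [mulVec_apply_eq_sum_extendZero HE x (hHPM i c)]
    simp only [g] at hX
    simp only [hX]
    exact sum_ite_transpose_mulVec_dotProduct ΦB hΨm Hq X i c
  have hsimplex : (∀ j c₁ c₂, (HE *ᵥ x) (.inr (j, c₁, c₂)) = 0) ↔
      ∀ j, ∃ w, g j = (· ⬝ᵥ w) := by
    simp only [fun j c₁ c₂ => mulVec_apply_eq_extendZero_add_add HE x (hHS j c₁ c₂),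
      ite_eq_left_iff]
    exact forall_congr' fun j =>
      (add_add_eq_zero_iff_map_add (extendZero_zero _)).trans map_add_iff_exists_eq_dotProduct
  simp only [funext_iff, Sum.forall, Prod.forall, Pi.zero_apply]
  rw [hsimplex]
  constructor
  · rintro ⟨hrows, hg⟩
    choose w hw using hg
    have hgX : ∀ j, g j = (· ⬝ᵥ ΦB (ΦB.symm (w j))) := by simpa using hw
    refine ⟨fun j => ΦB.symm (w j), fun i => ?_, (hcode _).2 hgX⟩
    exact ΦB.map_eq_zero_iff.1 (forall_ne_zero_dotProduct_eq_zero_iff.1 fun c =>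
      (hPM _ hgX i c).symm.trans (hrows i c))
  · rintro ⟨X, hX, hx⟩
    have hgX := (hcode X).1 hx
    exact ⟨fun i c => by rw [hPM X hgX, hX, map_zero, dotProduct_zero],
      fun j => ⟨_, hgX j⟩⟩

/-- For `x : Fin n × V* → ZMod 2`, one has `H_E *ᵥ x = 0` iff there is
`X : Fin n → K` with `H_q *ᵥ X = 0` and `x (j, c) = Φ_E (X j) c` for all `j, c`; i.e. the
extended binary image `C_E` (the blockwise `Φ_E` image of the nullspace of `H_q`, equal to
the intersection of the nullspace of `H_PM` with the `n`-fold product of simplex codes)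
is the nullspace of `H_E`. -/
theorem extended_binary_image_eq_nullspace (b m n : ℕ) (hb : 1 ≤ b)
    (ΦB : GaloisField 2 b ≃ₗ[ZMod 2] (Fin b → ZMod 2))
    (Ψm : GaloisField 2 b → Matrix (Fin b) (Fin b) (ZMod 2))
    (hΨm : ∀ (h x : GaloisField 2 b), Ψm h *ᵥ ΦB x = ΦB (h * x))
    (ΦE : GaloisField 2 b → ({v : Fin b → ZMod 2 // v ≠ 0} → ZMod 2))
    (hΦE : ∀ (X : GaloisField 2 b) (c : {v : Fin b → ZMod 2 // v ≠ 0}),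
      ΦE X c = ∑ e : Fin b, (c : Fin b → ZMod 2) e * ΦB X e)
    (Hq : Matrix (Fin m) (Fin n) (GaloisField 2 b))
    (HE : Matrix
      ((Fin m × {v : Fin b → ZMod 2 // v ≠ 0}) ⊕
        (Fin n × {v : Fin b → ZMod 2 // v ≠ 0} × {v : Fin b → ZMod 2 // v ≠ 0}))
      (Fin n × {v : Fin b → ZMod 2 // v ≠ 0}) (ZMod 2))
    -- the `H_PM` rows of `H_E`:
    (hHPM : ∀ (i : Fin m) (c : {v : Fin b → ZMod 2 // v ≠ 0}) (j : Fin n)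
        (c' : {v : Fin b → ZMod 2 // v ≠ 0}),
      HE (Sum.inl (i, c)) (j, c') = 1 ↔
        (Hq i j ≠ 0 ∧
          (c' : Fin b → ZMod 2) = (Ψm (Hq i j))ᵀ *ᵥ (c : Fin b → ZMod 2)))
    -- the simplex rows of `H_E`:
    (hHS : ∀ (j₀ : Fin n) (c₁ c₂ : {v : Fin b → ZMod 2 // v ≠ 0}) (j : Fin n)
        (c' : {v : Fin b → ZMod 2 // v ≠ 0}),
      HE (Sum.inr (j₀, c₁, c₂)) (j, c') = 1 ↔
        (j = j₀ ∧ c₁ ≠ c₂ ∧ (c₁ : Fin b → ZMod 2) + (c₂ : Fin b → ZMod 2) ≠ 0 ∧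
          (c' = c₁ ∨ c' = c₂ ∨
            (c' : Fin b → ZMod 2) = (c₁ : Fin b → ZMod 2) + (c₂ : Fin b → ZMod 2))))
    (x : Fin n × {v : Fin b → ZMod 2 // v ≠ 0} → ZMod 2) :
    HE *ᵥ x = 0 ↔
      ∃ X : Fin n → GaloisField 2 b, Hq *ᵥ X = 0 ∧
        ∀ (j : Fin n) (c : {v : Fin b → ZMod 2 // v ≠ 0}), x (j, c) = ΦE (X j) c :=
  extended_binary_image_eq_nullspace_general b m n ΦB Ψm hΨm ΦE hΦE Hq HE hHPM hHS x
end

section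
/- (Lemma 2) For every row index i ∈ Fin m of H_q and every c ∈ V*, the ZMod 2-row space of H_E contains a vector r : Fin n × V* → ZMod 2 that vanishes on all columns (j,c') with c' not a standard unit vector, and whose values on the transmitted columns equal the c-indexed linear combination of the corresponding rows of H_B: r(j, u_e) = Σ_{e' : c(e') = 1} H_B((i,e'),(j,e)) for all j ∈ Fin n and e ∈ Fin b. Thus H_E contains (supported on the transmitted coordinates) all nontrivial linear combinations of the b rows of H_B corresponding to each row of H_q. -/
/-!
Write `e(j, v)` (`columnIndicator j v`) for the indicator of column `(j, v)`, extended by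
`e(j, 0) = 0`. The simplex rows of `H_E` say precisely that `v ↦ e(j, v)` is additive modulo the
row space, so it is `ZMod 2`-linear there and `e(j, v) ≡ ∑ₑ vₑ e(j, uₑ)`. The `H_PM` row `(i, c)`
is `∑ⱼ e(j, Ψ(H_q i j)ᵀ c)` (zero entries of `H_q` contribute `e(j, 0) = 0`, as `Ψ 0 = 0`);
expanding each summand over the unit columns gives a vector of the row space supported on the
transmitted columns, with entry `(Ψ(H_q i j)ᵀ c)ₑ` at `(j, uₑ)`.
-/

open Matrix

theorem Submodule.sum_smul_sub_mem_of_map_add_sub_mem {n : ℕ} {ι M : Type*} [Fintype ι]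
    [DecidableEq ι] [AddCommGroup M] [Module (ZMod n) M] (S : Submodule (ZMod n) M)
    (T : (ι → ZMod n) → M) (hT : ∀ x y, T (x + y) - (T x + T y) ∈ S) (v : ι → ZMod n) :
    ∑ i, v i • T (Pi.single i 1) - T v ∈ S := by
  let f : (ι → ZMod n) →ₗ[ZMod n] M ⧸ S := AddMonoidHom.toZModLinearMap n <|
    AddMonoidHom.mk' (fun x => S.mkQ (T x)) fun x y => by
      rw [← map_add, ← sub_eq_zero, ← map_sub]
      exact (Submodule.Quotient.mk_eq_zero S).2 (hT x y)
  have hf : f v = ∑ i, v i • f (Pi.single i 1) := by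
    conv_lhs => rw [pi_eq_sum_univ' v, map_sum]
    simp only [map_smul]
  rw [← Submodule.Quotient.mk_eq_zero, Submodule.Quotient.mk_sub, sub_eq_zero,
    ← Submodule.mkQ_apply, map_sum]
  simp only [map_smul]
  exact hf.symm

theorem ZMod.eq_ite_of_eq_one_iff {x : ZMod 2} {P : Prop} [Decidable P] (h : x = 1 ↔ P) :
    x = if P then 1 else 0 := by
  split_ifs with hP
  · exact h.2 hP
  · have key : ∀ y : ZMod 2, y ≠ 1 → y = 0 := by decide
    exact key x fun hx => hP (h.1 hx)

section ColumnIndicator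

variable {ι W R : Type*} [DecidableEq ι] [DecidableEq W] [Zero W]

def columnIndicator [Zero R] [One R] (j : ι) (v : W) : ι × {w : W // w ≠ 0} → R :=
  fun q => if q.1 = j ∧ (q.2 : W) = v then 1 else 0

@[simp]
theorem columnIndicator_zero [Zero R] [One R] (j : ι) :
    columnIndicator j (0 : W) = (0 : ι × {w : W // w ≠ 0} → R) :=
  funext fun q => if_neg fun h => q.2.2 h.2

theorem columnIndicator_add_add [AddMonoidWithOne R] (j : ι) {a b c : W} (hab : a ≠ b)
    (hbc : b ≠ c) (hac : a ≠ c) :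
    columnIndicator j a + columnIndicator j b + columnIndicator j c =
      fun q : ι × {w : W // w ≠ 0} =>
        if q.1 = j ∧ ((q.2 : W) = a ∨ (q.2 : W) = b ∨ (q.2 : W) = c) then (1 : R) else 0 := by
  funext q
  simp only [columnIndicator, Pi.add_apply]
  by_cases hj : q.1 = j <;> by_cases ha : (q.2 : W) = a <;> by_cases hb : (q.2 : W) = b <;>
    simp_all

theorem eq_sum_columnIndicator_of_eq_one_iff [Fintype ι] (r : ι × {w : W // w ≠ 0} → ZMod 2)
    (w : ι → W) (h : ∀ j c', r (j, c') = 1 ↔ (c' : W) = w j) :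
    r = ∑ j, columnIndicator j (w j) := by
  funext ⟨j, c'⟩
  rw [ZMod.eq_ite_of_eq_one_iff (h j c'), Finset.sum_apply, Finset.sum_eq_single j]
  · simp [columnIndicator]
  · exact fun k _ hkj => if_neg fun h => hkj h.1.symm
  · simp

end ColumnIndicator

section CharTwo

variable {ι W : Type*} [DecidableEq ι] [DecidableEq W] [AddCommGroup W] [Module (ZMod 2) W]

theorem eq_columnIndicator_add_add_of_eq_one_iff (r : ι × {w : W // w ≠ 0} → ZMod 2) (j : ι)
    {x y : {w : W // w ≠ 0}} (hxy : x ≠ y)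
    (h : ∀ j' c', r (j', c') = 1 ↔ j' = j ∧ x ≠ y ∧ (x : W) + y ≠ 0 ∧
      (c' = x ∨ c' = y ∨ (c' : W) = x + y)) :
    r = columnIndicator j (x : W) + columnIndicator j (y : W) +
      columnIndicator j ((x : W) + y) := by
  have hsum : (x : W) + y ≠ 0 := fun h0 =>
    hxy (Subtype.ext (by rwa [add_eq_zero_iff_eq_neg, ZModModule.neg_eq_self] at h0))
  rw [columnIndicator_add_add j (Subtype.coe_ne_coe.2 hxy)
    (fun h => x.2 (by simpa using (congrArg (· - (y : W)) h).symm))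
    (fun h => y.2 (by simpa using congrArg ((x : W) - ·) h))]
  funext ⟨j', c'⟩
  rw [ZMod.eq_ite_of_eq_one_iff (h j' c')]
  simp [hxy, hsum, Subtype.ext_iff]

theorem columnIndicator_add_sub_mem (S : Submodule (ZMod 2) (ι × {w : W // w ≠ 0} → ZMod 2))
    (hS : ∀ j (x y : W), x ≠ 0 → y ≠ 0 → x ≠ y →
      columnIndicator j x + columnIndicator j y + columnIndicator j (x + y) ∈ S)
    (j : ι) (x y : W) :
    columnIndicator j (x + y) - (columnIndicator j x + columnIndicator j y) ∈ S := by
  by_cases hx : x = 0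
  · simp [hx]
  by_cases hy : y = 0
  · simp [hy]
  by_cases hxy : x = y
  · simp [hxy, ZModModule.add_self]
  rw [ZModModule.sub_eq_add, add_comm]
  exact hS j x y hx hy hxy

end CharTwo

theorem sum_smul_columnIndicator_single_apply {ι κ : Type*} [Fintype ι] [DecidableEq ι]
    [Fintype κ] [DecidableEq κ] (w : ι → κ → ZMod 2) (j : ι)
    (c' : {v : κ → ZMod 2 // v ≠ 0}) :
    (∑ k, ∑ e, w k e • columnIndicator k (Pi.single e 1 : κ → ZMod 2)) (j, c') =
      ∑ e, if (c' : κ → ZMod 2) = Pi.single e 1 then w j e else 0 := by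
  simp only [Finset.sum_apply, Pi.smul_apply, columnIndicator, smul_eq_mul, mul_ite, mul_one,
    mul_zero, ite_and]
  rw [Finset.sum_comm]
  simp

theorem sum_smul_columnIndicator_single_apply_of_coe_eq {ι κ : Type*} [Fintype ι]
    [DecidableEq ι] [Fintype κ] [DecidableEq κ] (w : ι → κ → ZMod 2) (j : ι) {e : κ}
    {c' : {v : κ → ZMod 2 // v ≠ 0}} (hc' : (c' : κ → ZMod 2) = Pi.single e 1) :
    (∑ k, ∑ e, w k e • columnIndicator k (Pi.single e 1 : κ → ZMod 2)) (j, c') = w j e := by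
  rw [sum_smul_columnIndicator_single_apply, hc', Finset.sum_eq_single e, if_pos rfl]
  · exact fun e' _ he' => if_neg fun h => he' (by simpa [Pi.single_apply] using congrFun h e')
  · simp

theorem extended_image_contains_combinations_of_basic_rows_general (b m n : ℕ)
    (ΦB : GaloisField 2 b ≃ₗ[ZMod 2] (Fin b → ZMod 2))
    (Ψm : GaloisField 2 b → Matrix (Fin b) (Fin b) (ZMod 2))
    (hΨm : ∀ (h x : GaloisField 2 b), Ψm h *ᵥ ΦB x = ΦB (h * x))
    (Hq : Matrix (Fin m) (Fin n) (GaloisField 2 b))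
    (HB : Matrix (Fin m × Fin b) (Fin n × Fin b) (ZMod 2))
    (hHB : ∀ (i : Fin m) (e : Fin b) (j : Fin n) (f : Fin b),
      HB (i, e) (j, f) = Ψm (Hq i j) e f)
    (HE : Matrix
      ((Fin m × {v : Fin b → ZMod 2 // v ≠ 0}) ⊕
        (Fin n × {v : Fin b → ZMod 2 // v ≠ 0} × {v : Fin b → ZMod 2 // v ≠ 0}))
      (Fin n × {v : Fin b → ZMod 2 // v ≠ 0}) (ZMod 2))
    (hHPM : ∀ (i : Fin m) (c : {v : Fin b → ZMod 2 // v ≠ 0}) (j : Fin n)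
        (c' : {v : Fin b → ZMod 2 // v ≠ 0}),
      HE (Sum.inl (i, c)) (j, c') = 1 ↔
        (Hq i j ≠ 0 ∧
          (c' : Fin b → ZMod 2) = (Ψm (Hq i j))ᵀ *ᵥ (c : Fin b → ZMod 2)))
    (hHS : ∀ (j₀ : Fin n) (c₁ c₂ : {v : Fin b → ZMod 2 // v ≠ 0}) (j : Fin n)
        (c' : {v : Fin b → ZMod 2 // v ≠ 0}),
      HE (Sum.inr (j₀, c₁, c₂)) (j, c') = 1 ↔
        (j = j₀ ∧ c₁ ≠ c₂ ∧ (c₁ : Fin b → ZMod 2) + (c₂ : Fin b → ZMod 2) ≠ 0 ∧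
          (c' = c₁ ∨ c' = c₂ ∨
            (c' : Fin b → ZMod 2) = (c₁ : Fin b → ZMod 2) + (c₂ : Fin b → ZMod 2))))
    -- the standard unit vectors, as elements of `V*`:
    (u : Fin b → {v : Fin b → ZMod 2 // v ≠ 0})
    (hu : ∀ e : Fin b, (u e : Fin b → ZMod 2) = Pi.single e 1)
    (i : Fin m) (c : {v : Fin b → ZMod 2 // v ≠ 0}) :
    ∃ r ∈ Submodule.span (ZMod 2)
        (Set.range (fun ρ => HE ρ : _ → (Fin n × {v : Fin b → ZMod 2 // v ≠ 0}) → ZMod 2)),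
      (∀ (j : Fin n) (c' : {v : Fin b → ZMod 2 // v ≠ 0}),
        (∀ e : Fin b, c' ≠ u e) → r (j, c') = 0) ∧
      (∀ (j : Fin n) (e : Fin b),
        r (j, u e) = ∑ e' : Fin b, (c : Fin b → ZMod 2) e' * HB (i, e') (j, e)) := by
  set S := Submodule.span (ZMod 2)
    (Set.range (fun ρ => HE ρ : _ → (Fin n × {v : Fin b → ZMod 2 // v ≠ 0}) → ZMod 2))
  set w : Fin n → Fin b → ZMod 2 := fun j => (c : Fin b → ZMod 2) ᵥ* Ψm (Hq i j)
  have hΨ0 : Ψm 0 = 0 := mulVec_injective <| funext fun v => by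
    simpa using hΨm 0 (ΦB.symm v)
  have hPM : HE (Sum.inl (i, c)) = ∑ j, columnIndicator j (w j) :=
    eq_sum_columnIndicator_of_eq_one_iff _ w fun j c' => by
      rw [hHPM, mulVec_transpose]
      exact and_iff_right_of_imp fun hc' hq => c'.2 (by simp [hc', hq, hΨ0])
  have hadd := columnIndicator_add_sub_mem S fun j x y hx hy hxy => by
    rw [← eq_columnIndicator_add_add_of_eq_one_iff _ j (x := ⟨x, hx⟩) (y := ⟨y, hy⟩)
      (fun h => hxy (congrArg Subtype.val h)) (hHS j ⟨x, hx⟩ ⟨y, hy⟩)]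
    exact Submodule.subset_span ⟨_, rfl⟩
  refine ⟨∑ j, ∑ e, w j e • columnIndicator j (Pi.single e 1 : Fin b → ZMod 2), ?_,
    fun j c' hc' => ?_, fun j e => ?_⟩
  · have hexpand := S.sum_mem fun j (_ : j ∈ Finset.univ) =>
      S.sum_smul_sub_mem_of_map_add_sub_mem (columnIndicator j) (hadd j) (w j)
    have hrow : HE (Sum.inl (i, c)) ∈ S := Submodule.subset_span ⟨_, rfl⟩
    convert S.add_mem hrow hexpand using 1
    rw [hPM, ← Finset.sum_add_distrib]
    simp only [add_sub_cancel]
  · rw [sum_smul_columnIndicator_single_apply]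
    exact Finset.sum_eq_zero fun e _ => if_neg fun h => hc' e (Subtype.ext (h.trans (hu e).symm))
  · rw [sum_smul_columnIndicator_single_apply_of_coe_eq w j (hu e)]
    simp [w, vecMul, dotProduct, hHB]

/-- **Lemma 2.** For every row index `i` of `H_q` and every `c ∈ V*`, the
`ZMod 2`-row space of `H_E` contains a vector `r` that vanishes on all columns `(j, c')`
with `c'` not a standard unit vector, and whose values on the transmitted columns equal
the `c`-indexed linear combination of the corresponding rows of `H_B`:
`r (j, u_e) = ∑_{e'} c e' * H_B ((i, e'), (j, e))`. -/
theorem extended_image_contains_combinations_of_basic_rows (b m n : ℕ) (hb : 1 ≤ b)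
    (ΦB : GaloisField 2 b ≃ₗ[ZMod 2] (Fin b → ZMod 2))
    (Ψm : GaloisField 2 b → Matrix (Fin b) (Fin b) (ZMod 2))
    (hΨm : ∀ (h x : GaloisField 2 b), Ψm h *ᵥ ΦB x = ΦB (h * x))
    (Hq : Matrix (Fin m) (Fin n) (GaloisField 2 b))
    (HB : Matrix (Fin m × Fin b) (Fin n × Fin b) (ZMod 2))
    (hHB : ∀ (i : Fin m) (e : Fin b) (j : Fin n) (f : Fin b),
      HB (i, e) (j, f) = Ψm (Hq i j) e f)
    (HE : Matrix
      ((Fin m × {v : Fin b → ZMod 2 // v ≠ 0}) ⊕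
        (Fin n × {v : Fin b → ZMod 2 // v ≠ 0} × {v : Fin b → ZMod 2 // v ≠ 0}))
      (Fin n × {v : Fin b → ZMod 2 // v ≠ 0}) (ZMod 2))
    (hHPM : ∀ (i : Fin m) (c : {v : Fin b → ZMod 2 // v ≠ 0}) (j : Fin n)
        (c' : {v : Fin b → ZMod 2 // v ≠ 0}),
      HE (Sum.inl (i, c)) (j, c') = 1 ↔
        (Hq i j ≠ 0 ∧
          (c' : Fin b → ZMod 2) = (Ψm (Hq i j))ᵀ *ᵥ (c : Fin b → ZMod 2)))
    (hHS : ∀ (j₀ : Fin n) (c₁ c₂ : {v : Fin b → ZMod 2 // v ≠ 0}) (j : Fin n)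
        (c' : {v : Fin b → ZMod 2 // v ≠ 0}),
      HE (Sum.inr (j₀, c₁, c₂)) (j, c') = 1 ↔
        (j = j₀ ∧ c₁ ≠ c₂ ∧ (c₁ : Fin b → ZMod 2) + (c₂ : Fin b → ZMod 2) ≠ 0 ∧
          (c' = c₁ ∨ c' = c₂ ∨
            (c' : Fin b → ZMod 2) = (c₁ : Fin b → ZMod 2) + (c₂ : Fin b → ZMod 2))))
    -- the standard unit vectors, as elements of `V*`:
    (u : Fin b → {v : Fin b → ZMod 2 // v ≠ 0})
    (hu : ∀ e : Fin b, (u e : Fin b → ZMod 2) = Pi.single e 1)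
    (i : Fin m) (c : {v : Fin b → ZMod 2 // v ≠ 0}) :
    ∃ r ∈ Submodule.span (ZMod 2)
        (Set.range (fun ρ => HE ρ : _ → (Fin n × {v : Fin b → ZMod 2 // v ≠ 0}) → ZMod 2)),
      (∀ (j : Fin n) (c' : {v : Fin b → ZMod 2 // v ≠ 0}),
        (∀ e : Fin b, c' ≠ u e) → r (j, c') = 0) ∧
      (∀ (j : Fin n) (e : Fin b),
        r (j, u e) = ∑ e' : Fin b, (c : Fin b → ZMod 2) e' * HB (i, e') (j, e)) :=
  extended_image_contains_combinations_of_basic_rows_general b m n ΦB Ψm hΨm Hq HB hHB HE hHPM hHS u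
    hu i c
end

section
/- (Proposition 1: 𝕊_E ⊆ 𝕊_B) For every stopping set T of H_E, the set {(j,e) ∈ Fin n × Fin b : (j, u_e) ∈ T} is a stopping set of H_B. In other words, every stopping set of the extended binary image (restricted to the transmitted coordinates and identified with coordinates of the basic binary image) is a stopping set of the basic binary image. -/
/-!
Fix a row `(i, e)` of `H_B` and write `x_j` for row `e` of `Ψ_m(H_q i j)`, i.e. the vector
`Ψ_m(H_q i j)ᵀ u_e`, so that row `(i, e)` of `H_B` is the concatenation of the `x_j`. For a
stopping set `T` of `H_E` let `T_j = labelsAt T j = {c | (j, c) ∈ T}`. The simplex rows force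
`V ∖ T_j` to be closed under addition, hence a subgroup `W_j` of `V`. If row `(i, e)` of
`H_B` met the restricted set in exactly one position `(j₀, f₀)`, then `x_j ∈ W_j` for
`j ≠ j₀`, being a sum of unit vectors `u_f ∉ T_j`, while `x_{j₀} ∉ W_{j₀}`, since
`x_{j₀} - u_{f₀} ∈ W_{j₀}` but `u_{f₀} ∉ W_{j₀}`. So the parity-check row `(i, u_e)` of
`H_E`, whose support is `{(j, x_j) | H_q i j ≠ 0}`, meets `T` exactly once, at `(j₀, x_{j₀})`.
-/

open Matrix

/-- For a matrix `H` over `ZMod 2`, a stopping set is a set `S` of column indices such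
that no row of `H` has exactly one nonzero entry in the columns belonging to `S`. -/
def IsStoppingSet {ρ J : Type*} (H : Matrix ρ J (ZMod 2)) (S : Set J) : Prop :=
  ∀ r : ρ, ¬ ∃! j : J, j ∈ S ∧ H r j ≠ 0

theorem ZMod.eq_one_of_ne_zero {x : ZMod 2} (hx : x ≠ 0) : x = 1 := by
  revert x; decide

section SubgroupsOfBinaryVectors

variable {ι : Type*} [Fintype ι] [DecidableEq ι]

theorem AddSubgroup.mem_of_forall_single_mem (W : AddSubgroup (ι → ZMod 2)) {v : ι → ZMod 2}
    (h : ∀ f, v f ≠ 0 → Pi.single f 1 ∈ W) : v ∈ W := by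
  rw [← Finset.univ_sum_single v]
  refine W.sum_mem fun f _ => ?_
  by_cases hvf : v f = 0
  · simp [hvf]
  · rw [ZMod.eq_one_of_ne_zero hvf]
    exact h f hvf

theorem AddSubgroup.notMem_of_single_notMem (W : AddSubgroup (ι → ZMod 2)) {v : ι → ZMod 2}
    {f₀ : ι} (hv : v f₀ ≠ 0) (h₀ : Pi.single f₀ 1 ∉ W)
    (h : ∀ f ≠ f₀, v f ≠ 0 → Pi.single f 1 ∈ W) : v ∉ W := by
  have hsub : v - Pi.single f₀ 1 ∈ W := by
    refine W.mem_of_forall_single_mem fun f hf => ?_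
    by_cases hff₀ : f = f₀
    · subst hff₀
      simp [ZMod.eq_one_of_ne_zero hv] at hf
    · simp only [Pi.sub_apply, Pi.single_eq_of_ne hff₀, sub_zero] at hf
      exact h f hff₀ hf
  intro hvW
  exact h₀ (by simpa using W.sub_mem hvW hsub)

theorem existsUnique_notMem_of_existsUnique_single_notMem {J : Type*}
    (W : J → AddSubgroup (ι → ZMod 2)) (x : J → ι → ZMod 2)
    (h : ∃! q : J × ι, Pi.single q.2 1 ∉ W q.1 ∧ x q.1 q.2 ≠ 0) :
    ∃! j, x j ∉ W j := by
  obtain ⟨⟨j₀, f₀⟩, ⟨hs₀, hx₀⟩, huniq⟩ := h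
  refine ⟨j₀, (W j₀).notMem_of_single_notMem hx₀ hs₀ fun f hf hxf => ?_, fun j hj => ?_⟩
  · by_contra hs
    exact hf (congrArg Prod.snd (huniq (j₀, f) ⟨hs, hxf⟩))
  · by_contra hj₀
    refine hj ((W j).mem_of_forall_single_mem fun f hxf => ?_)
    by_contra hs
    exact hj₀ (congrArg Prod.fst (huniq (j, f) ⟨hs, hxf⟩))

end SubgroupsOfBinaryVectors

section Labels

variable {V J : Type*} [Zero V]

def labelsAt (T : Set (J × {v : V // v ≠ 0})) (j : J) : Set V :=
  {v | ∃ hv : v ≠ 0, (j, ⟨v, hv⟩) ∈ T}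

theorem mem_labelsAt {T : Set (J × {v : V // v ≠ 0})} {j : J} {c : {v : V // v ≠ 0}} :
    (c : V) ∈ labelsAt T j ↔ (j, c) ∈ T :=
  ⟨fun ⟨_, hc⟩ => hc, fun hc => ⟨c.2, hc⟩⟩

theorem zero_notMem_labelsAt (T : Set (J × {v : V // v ≠ 0})) (j : J) :
    (0 : V) ∉ labelsAt T j :=
  fun ⟨h, _⟩ => h rfl

theorem IsStoppingSet.not_existsUnique_mem_labelsAt {ι σ K : Type*} [Zero K]
    {HE : Matrix ((ι × {v : V // v ≠ 0}) ⊕ σ) (J × {v : V // v ≠ 0}) (ZMod 2)}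
    {Hq : Matrix ι J K} {A : K → V → V} (hA : ∀ c, A 0 c = 0)
    (hHPM : ∀ (i : ι) (c : {v : V // v ≠ 0}) (j : J) (c' : {v : V // v ≠ 0}),
      HE (Sum.inl (i, c)) (j, c') = 1 ↔ (Hq i j ≠ 0 ∧ (c' : V) = A (Hq i j) c))
    {T : Set (J × {v : V // v ≠ 0})} (hT : IsStoppingSet HE T) (i : ι) (c : {v : V // v ≠ 0}) :
    ¬ ∃! j, A (Hq i j) c ∈ labelsAt T j := by
  rintro ⟨j₀, ⟨hc₀, hT₀⟩, huniq⟩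
  have hq₀ : Hq i j₀ ≠ 0 := fun h => hc₀ (by rw [h, hA])
  apply hT (Sum.inl (i, c))
  refine ⟨(j₀, ⟨_, hc₀⟩), ⟨hT₀, ?_⟩, ?_⟩
  · rw [(hHPM _ _ _ _).2 ⟨hq₀, rfl⟩]
    exact one_ne_zero
  · rintro ⟨j, c'⟩ ⟨hc'T, hentry⟩
    obtain ⟨-, hc'⟩ := (hHPM _ _ _ _).1 (ZMod.eq_one_of_ne_zero hentry)
    have hmem : A (Hq i j) c ∈ labelsAt T j := hc' ▸ mem_labelsAt.2 hc'T
    obtain rfl : j = j₀ := huniq j hmem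
    exact Prod.ext rfl (Subtype.ext hc')

end Labels

section BinaryModule

variable {V J : Type*} [AddCommGroup V] [Module (ZMod 2) V]

/-- The hypothesis `hA` says that `A` meets no line `{c₁, c₂, c₁ + c₂}` in exactly one point. -/
def AddSubgroup.ofCompl (A : Set V) (h₀ : 0 ∉ A)
    (hA : ∀ c₁ ∈ A, ∀ c₂ ∉ A, c₂ ≠ 0 → c₁ + c₂ ∈ A) : AddSubgroup V where
  carrier := Aᶜ
  zero_mem' := h₀
  neg_mem' {v} hv := by rwa [ZModModule.neg_eq_self]
  add_mem' {v₁ v₂} hv₁ hv₂ hv := by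
    by_cases h₁ : v₁ = 0
    · rw [h₁, zero_add] at hv
      exact hv₂ hv
    have := hA _ hv v₁ hv₁ h₁
    rw [add_comm v₁ v₂, add_assoc, ZModModule.add_self, add_zero] at this
    exact hv₂ this

theorem AddSubgroup.mem_ofCompl {A : Set V} {h₀ : 0 ∉ A}
    {hA : ∀ c₁ ∈ A, ∀ c₂ ∉ A, c₂ ≠ 0 → c₁ + c₂ ∈ A} {v : V} :
    v ∈ AddSubgroup.ofCompl A h₀ hA ↔ v ∉ A := Iff.rfl

theorem IsStoppingSet.add_mem_labelsAt {σ : Type*}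
    {HE : Matrix (σ ⊕ (J × {v : V // v ≠ 0} × {v : V // v ≠ 0})) (J × {v : V // v ≠ 0})
      (ZMod 2)}
    (hHS : ∀ (j₀ : J) (c₁ c₂ : {v : V // v ≠ 0}) (j : J) (c' : {v : V // v ≠ 0}),
      HE (Sum.inr (j₀, c₁, c₂)) (j, c') = 1 ↔
        (j = j₀ ∧ c₁ ≠ c₂ ∧ (c₁ : V) + c₂ ≠ 0 ∧ (c' = c₁ ∨ c' = c₂ ∨ (c' : V) = c₁ + c₂)))
    {T : Set (J × {v : V // v ≠ 0})} (hT : IsStoppingSet HE T) (j : J) :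
    ∀ c₁ ∈ labelsAt T j, ∀ c₂ ∉ labelsAt T j, c₂ ≠ 0 → c₁ + c₂ ∈ labelsAt T j := by
  rintro c₁ ⟨hc₁, hT₁⟩ c₂ hT₂ hc₂
  by_contra hT₃
  have hne : (⟨c₁, hc₁⟩ : {v : V // v ≠ 0}) ≠ ⟨c₂, hc₂⟩ := by
    rintro ⟨⟩
    exact hT₂ ⟨hc₁, hT₁⟩
  have hsum : c₁ + c₂ ≠ 0 := by
    rw [← ZModModule.sub_eq_add, sub_ne_zero]
    rintro rfl
    exact hT₂ ⟨hc₁, hT₁⟩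
  apply hT (Sum.inr (j, ⟨c₁, hc₁⟩, ⟨c₂, hc₂⟩))
  refine ⟨(j, ⟨c₁, hc₁⟩), ⟨hT₁, ?_⟩, ?_⟩
  · rw [(hHS _ _ _ _ _).2 ⟨rfl, hne, hsum, Or.inl rfl⟩]
    exact one_ne_zero
  · rintro ⟨j', c'⟩ ⟨hc'T, hentry⟩
    obtain ⟨rfl, -, -, rfl | rfl | hc'⟩ := (hHS _ _ _ _ _).1 (ZMod.eq_one_of_ne_zero hentry)
    · rfl
    · exact absurd (mem_labelsAt.2 hc'T) hT₂
    · exact absurd (hc' ▸ mem_labelsAt.2 hc'T) hT₃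

end BinaryModule

theorem stopping_set_of_extended_is_stopping_set_of_basic_general (b m n : ℕ)
    (ΦB : GaloisField 2 b ≃ₗ[ZMod 2] (Fin b → ZMod 2))
    (Ψm : GaloisField 2 b → Matrix (Fin b) (Fin b) (ZMod 2))
    (hΨm : ∀ (h x : GaloisField 2 b), Ψm h *ᵥ ΦB x = ΦB (h * x))
    (Hq : Matrix (Fin m) (Fin n) (GaloisField 2 b))
    (HB : Matrix (Fin m × Fin b) (Fin n × Fin b) (ZMod 2))
    (hHB : ∀ (i : Fin m) (e : Fin b) (j : Fin n) (f : Fin b),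
      HB (i, e) (j, f) = Ψm (Hq i j) e f)
    (HE : Matrix
      ((Fin m × {v : Fin b → ZMod 2 // v ≠ 0}) ⊕
        (Fin n × {v : Fin b → ZMod 2 // v ≠ 0} × {v : Fin b → ZMod 2 // v ≠ 0}))
      (Fin n × {v : Fin b → ZMod 2 // v ≠ 0}) (ZMod 2))
    (hHPM : ∀ (i : Fin m) (c : {v : Fin b → ZMod 2 // v ≠ 0}) (j : Fin n)
        (c' : {v : Fin b → ZMod 2 // v ≠ 0}),
      HE (Sum.inl (i, c)) (j, c') = 1 ↔
        (Hq i j ≠ 0 ∧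
          (c' : Fin b → ZMod 2) = (Ψm (Hq i j))ᵀ *ᵥ (c : Fin b → ZMod 2)))
    (hHS : ∀ (j₀ : Fin n) (c₁ c₂ : {v : Fin b → ZMod 2 // v ≠ 0}) (j : Fin n)
        (c' : {v : Fin b → ZMod 2 // v ≠ 0}),
      HE (Sum.inr (j₀, c₁, c₂)) (j, c') = 1 ↔
        (j = j₀ ∧ c₁ ≠ c₂ ∧ (c₁ : Fin b → ZMod 2) + (c₂ : Fin b → ZMod 2) ≠ 0 ∧
          (c' = c₁ ∨ c' = c₂ ∨
            (c' : Fin b → ZMod 2) = (c₁ : Fin b → ZMod 2) + (c₂ : Fin b → ZMod 2))))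
    (u : Fin b → {v : Fin b → ZMod 2 // v ≠ 0})
    (hu : ∀ e : Fin b, (u e : Fin b → ZMod 2) = Pi.single e 1)
    (T : Set (Fin n × {v : Fin b → ZMod 2 // v ≠ 0}))
    (hT : IsStoppingSet HE T) :
    IsStoppingSet HB {q : Fin n × Fin b | (q.1, u q.2) ∈ T} := by
  rintro ⟨i, e⟩ hrow
  have hΨ₀ : Ψm 0 = 0 := Matrix.toLin'.injective <| LinearMap.ext fun v => by
    simpa using hΨm 0 (ΦB.symm v)
  let W j := AddSubgroup.ofCompl (labelsAt T j) (zero_notMem_labelsAt T j)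
    (hT.add_mem_labelsAt hHS j)
  have hrow' : ∃! q : Fin n × Fin b, Pi.single q.2 1 ∉ W q.1 ∧ Ψm (Hq i q.1) e q.2 ≠ 0 := by
    refine (existsUnique_congr fun ⟨j, f⟩ => ?_).1 hrow
    rw [AddSubgroup.mem_ofCompl, not_not, ← hu, mem_labelsAt, hHB]
    rfl
  refine hT.not_existsUnique_mem_labelsAt (A := fun h c => (Ψm h)ᵀ *ᵥ c) (by simp [hΨ₀]) hHPM
    i (u e) ?_
  simpa [W, AddSubgroup.mem_ofCompl, hu, mulVec_transpose, Matrix.row] using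
    existsUnique_notMem_of_existsUnique_single_notMem W (fun j => Ψm (Hq i j) e) hrow'

/-- **Proposition 1: 𝕊_E ⊆ 𝕊_B.** For every stopping set `T` of `H_E`,
the set `{(j, e) : (j, u_e) ∈ T}` is a stopping set of `H_B`: every stopping set of the
extended binary image, restricted to the transmitted coordinates and identified with
coordinates of the basic binary image, is a stopping set of the basic binary image. -/
theorem stopping_set_of_extended_is_stopping_set_of_basic (b m n : ℕ) (hb : 1 ≤ b)
    (ΦB : GaloisField 2 b ≃ₗ[ZMod 2] (Fin b → ZMod 2))
    (Ψm : GaloisField 2 b → Matrix (Fin b) (Fin b) (ZMod 2))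
    (hΨm : ∀ (h x : GaloisField 2 b), Ψm h *ᵥ ΦB x = ΦB (h * x))
    (Hq : Matrix (Fin m) (Fin n) (GaloisField 2 b))
    (HB : Matrix (Fin m × Fin b) (Fin n × Fin b) (ZMod 2))
    (hHB : ∀ (i : Fin m) (e : Fin b) (j : Fin n) (f : Fin b),
      HB (i, e) (j, f) = Ψm (Hq i j) e f)
    (HE : Matrix
      ((Fin m × {v : Fin b → ZMod 2 // v ≠ 0}) ⊕
        (Fin n × {v : Fin b → ZMod 2 // v ≠ 0} × {v : Fin b → ZMod 2 // v ≠ 0}))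
      (Fin n × {v : Fin b → ZMod 2 // v ≠ 0}) (ZMod 2))
    (hHPM : ∀ (i : Fin m) (c : {v : Fin b → ZMod 2 // v ≠ 0}) (j : Fin n)
        (c' : {v : Fin b → ZMod 2 // v ≠ 0}),
      HE (Sum.inl (i, c)) (j, c') = 1 ↔
        (Hq i j ≠ 0 ∧
          (c' : Fin b → ZMod 2) = (Ψm (Hq i j))ᵀ *ᵥ (c : Fin b → ZMod 2)))
    (hHS : ∀ (j₀ : Fin n) (c₁ c₂ : {v : Fin b → ZMod 2 // v ≠ 0}) (j : Fin n)
        (c' : {v : Fin b → ZMod 2 // v ≠ 0}),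
      HE (Sum.inr (j₀, c₁, c₂)) (j, c') = 1 ↔
        (j = j₀ ∧ c₁ ≠ c₂ ∧ (c₁ : Fin b → ZMod 2) + (c₂ : Fin b → ZMod 2) ≠ 0 ∧
          (c' = c₁ ∨ c' = c₂ ∨
            (c' : Fin b → ZMod 2) = (c₁ : Fin b → ZMod 2) + (c₂ : Fin b → ZMod 2))))
    (u : Fin b → {v : Fin b → ZMod 2 // v ≠ 0})
    (hu : ∀ e : Fin b, (u e : Fin b → ZMod 2) = Pi.single e 1)
    (T : Set (Fin n × {v : Fin b → ZMod 2 // v ≠ 0}))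
    (hT : IsStoppingSet HE T) :
    IsStoppingSet HB {q : Fin n × Fin b | (q.1, u q.2) ∈ T} :=
  stopping_set_of_extended_is_stopping_set_of_basic_general b m n ΦB Ψm hΨm Hq HB hHB HE hHPM hHS u
    hu T hT
end

section
/- Let H be a matrix over ZMod 2 with column index set J, let S ⊆ J be a set of (erased) columns, and let p ∈ S. Then the following are equivalent: (i) every vector x in the kernel of H whose support is contained in S satisfies x(p) = 0 (i.e., the ML decoder can recover bit p from the unerased positions); (ii) the row space of H over ZMod 2 contains a vector h whose support intersects S exactly in {p}. -/
/-!
Condition (i) says that the unit vector `e_p` is dot-orthogonal to every vector orthogonal to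
the rows of `H` and to the unit vectors `e_j`, `j ∉ S`. By finite-dimensional duality this puts
`e_p` in the span of these vectors, i.e. `e_p = h + e` with `h` in the row space and `e`
vanishing on `S`; so `h = e_p` on `S`, which over `ZMod 2` is the support condition (ii).
-/

open Matrix Submodule

namespace Pi

variable {R ι : Type*} [Finite ι]

theorem mem_span_basisFun_image_iff [Semiring R] {T : Set ι} {e : ι → R} :
    e ∈ span R (Pi.basisFun R ι '' T) ↔ ∀ i ∉ T, e i = 0 := by
  rw [Module.Basis.mem_span_image]
  simp [Set.subset_def, not_imp_comm]

theorem mem_sup_span_basisFun_image_compl_iff [Ring R] {W : Submodule R (ι → R)} {S : Set ι}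
    {w : ι → R} : w ∈ W ⊔ span R (Pi.basisFun R ι '' Sᶜ) ↔ ∃ h ∈ W, Set.EqOn h w S := by
  simp only [mem_sup, mem_span_basisFun_image_iff, Set.notMem_compl_iff]
  constructor
  · rintro ⟨h, hW, e, he, rfl⟩
    exact ⟨h, hW, fun j hj => by simp [he j hj]⟩
  · rintro ⟨h, hW, hhw⟩
    exact ⟨h, hW, w - h, fun j hj => sub_eq_zero.2 (hhw hj).symm, add_sub_cancel h w⟩

end Pi

namespace Matrix

variable {K ρ J : Type*} [Field K] [Fintype J]

theorem mem_span_iff_forall_dotProduct_eq_zero {s : Set (J → K)} {w : J → K} :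
    w ∈ span K s ↔ ∀ x, (∀ v ∈ s, v ⬝ᵥ x = 0) → w ⬝ᵥ x = 0 := by
  classical
  constructor
  · intro hw x hx
    have hle : span K s ≤ LinearMap.ker (dotProductEquiv K J x) :=
      span_le.2 fun v hv => by simpa [dotProduct_comm] using hx v hv
    simpa [dotProduct_comm] using hle hw
  · intro h
    have hmem := FiniteDimensional.mem_span_of_iInf_ker_le_ker
      (L := fun v : s => dotProductEquiv K J v) (K := dotProductEquiv K J w)
      (fun x hx => by simpa using h x (by simpa using hx))
    rwa [← Set.image_eq_range, ← LinearEquiv.coe_coe, ← map_span, mem_map_equiv,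
      LinearEquiv.coe_coe, LinearEquiv.symm_apply_apply] at hmem

theorem forall_mulVec_eq_zero_apply_eq_zero_iff [DecidableEq J] (H : Matrix ρ J K) (S : Set J)
    (p : J) : (∀ x, H *ᵥ x = 0 → (∀ j ∉ S, x j = 0) → x p = 0) ↔
      ∃ h ∈ span K (Set.range H), Set.EqOn h (Pi.single p 1) S := by
  have hker (x : J → K) : (∀ v ∈ Set.range H ∪ Pi.basisFun K J '' Sᶜ, v ⬝ᵥ x = 0) ↔
      H *ᵥ x = 0 ∧ ∀ j ∉ S, x j = 0 := by
    simp only [Set.mem_union, or_imp, forall_and, Set.forall_mem_image, Pi.basisFun_apply,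
      single_one_dotProduct, Set.mem_compl_iff, funext_iff, mulVec, Pi.zero_apply]
    exact Set.forall_mem_range.and Iff.rfl
  rw [← Pi.mem_sup_span_basisFun_image_compl_iff, ← span_union,
    mem_span_iff_forall_dotProduct_eq_zero]
  simp only [hker, single_one_dotProduct, and_imp]

end Matrix

theorem ZMod.setOf_ne_zero_inter_eq_singleton_iff_eqOn_single {J : Type*} [DecidableEq J]
    {h : J → ZMod 2} {S : Set J} {p : J} (hp : p ∈ S) :
    {j | h j ≠ 0} ∩ S = {p} ↔ Set.EqOn h (Pi.single p 1) S := by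
  have hne : ∀ a : ZMod 2, a ≠ 0 ↔ a = 1 := by decide
  simp only [Set.ext_iff, Set.mem_inter_iff, Set.mem_ofPred_eq, Set.mem_singleton_iff, hne]
  constructor
  · intro hsupp j hj
    obtain rfl | hjp := eq_or_ne j p
    · rw [Pi.single_eq_same, ((hsupp j).2 rfl).1]
    · rw [Pi.single_eq_of_ne hjp, ← not_ne_iff, hne]
      exact fun h1 => hjp ((hsupp j).1 ⟨h1, hj⟩)
  · intro heq j
    constructor
    · rintro ⟨h1, hj⟩
      by_contra hjp
      rw [heq hj, Pi.single_eq_of_ne hjp] at h1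
      exact zero_ne_one h1
    · rintro rfl
      exact ⟨by rw [heq hp, Pi.single_eq_same], hp⟩

theorem ml_recoverable_iff_row_space_check_general {ρ J : Type*} [Fintype J]
    (H : Matrix ρ J (ZMod 2)) (S : Set J) (p : J) (hp : p ∈ S) :
    (∀ x : J → ZMod 2, H *ᵥ x = 0 → (∀ j ∉ S, x j = 0) → x p = 0) ↔
    ∃ h ∈ Submodule.span (ZMod 2) (Set.range (fun r => H r : ρ → J → ZMod 2)),
      {j : J | h j ≠ 0} ∩ S = {p} := by
  classical
  rw [forall_mulVec_eq_zero_apply_eq_zero_iff]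
  simp only [ZMod.setOf_ne_zero_inter_eq_singleton_iff_eqOn_single hp]

/-- For a matrix `H` over `ZMod 2`, a set `S` of (erased) columns and
`p ∈ S`, the following are equivalent: (i) every `x` in the kernel of `H` supported
inside `S` has `x p = 0` (ML recovery of bit `p`); (ii) the row space of `H` contains a
vector `h` whose support intersects `S` exactly in `{p}`. -/
theorem ml_recoverable_iff_row_space_check {ρ J : Type*} [Fintype ρ] [Fintype J]
    (H : Matrix ρ J (ZMod 2)) (S : Set J) (p : J) (hp : p ∈ S) :
    (∀ x : J → ZMod 2, H *ᵥ x = 0 → (∀ j ∉ S, x j = 0) → x p = 0) ↔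
    ∃ h ∈ Submodule.span (ZMod 2) (Set.range (fun r => H r : ρ → J → ZMod 2)),
      {j : J | h j ≠ 0} ∩ S = {p} :=
  ml_recoverable_iff_row_space_check_general H S p hp
end

section
/- (Proposition 2) Let S ⊆ Fin n × Fin b be a stopping set of H_B, and suppose there is no stopping set T of H_E with T ∩ I_t = {(j, u_e) : (j,e) ∈ S} (i.e., S ∈ 𝕊_B \ 𝕊_E). Then there exists a vector h_S in the ZMod 2-row space of H_B whose support intersects S in exactly one element; consequently, S is not a stopping set of the augmented matrix obtained by adjoining the redundant parity-check h_S as an extra row to H_B. -/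
open Matrix

/-!
Suppose no vector of the row space of `H_B` meets `S` in exactly one position. Call a vector `v`
on block `j` *traced* if some vector of the row space agrees on `S` with `v` placed on block `j`
and zero elsewhere; the traced vectors form a subspace `L_j`. A unit vector `u_e` is traced iff
`(j, e) ∉ S` (otherwise its witness would meet `S` only at `(j, e)`), so `T = {(j, c) : c ∉ L_j}`
satisfies `T ∩ I_t = {(j, u_e) : (j, e) ∈ S}`. And `T` is a stopping set of `H_E`: a simplex row
meets block `j` in `c₁, c₂, c₁ + c₂`, and any two of them in `L_j` put the third there; a row
`(i, c)` of `H_PM` meets each block `j` in the `j`-block of the row-space vector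
`c ᵥ* H_B[(i, ·)]`, and if all its blocks but one are traced, subtracting their witnesses traces
the last one.
-/

section BlockTrace

variable {K ι κ : Type*} [CommRing K] [DecidableEq ι]

def blockSingle (j : ι) : (κ → K) →ₗ[K] ι × κ → K :=
  (LinearEquiv.curry K K ι κ).symm.toLinearMap ∘ₗ LinearMap.single K (fun _ => κ → K) j

theorem blockSingle_apply (j : ι) (v : κ → K) (q : ι × κ) :
    blockSingle j v q = (Pi.single j v : ι → κ → K) q.1 q.2 :=
  rfl

theorem sum_blockSingle [Fintype ι] (x : ι × κ → K) :
    ∑ j, blockSingle j (fun f => x (j, f)) = x :=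
  (LinearEquiv.curry K K ι κ).injective <| by
    simp only [blockSingle, map_sum, LinearMap.coe_comp, LinearEquiv.coe_coe, Function.comp_apply,
      LinearEquiv.apply_symm_apply, LinearMap.coe_single]
    exact Finset.univ_sum_single (Function.curry x)

theorem blockSingle_mem_of_forall_ne [Fintype ι] {N : Submodule K (ι × κ → K)}
    {x : ι × κ → K} {j : ι} (hx : x ∈ N)
    (h : ∀ j' ≠ j, blockSingle j' (fun f => x (j', f)) ∈ N) :
    blockSingle j (fun f => x (j, f)) ∈ N := by
  have hsplit := Finset.add_sum_erase Finset.univ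
    (fun j' => blockSingle j' (fun f => x (j', f))) (Finset.mem_univ j)
  rw [sum_blockSingle] at hsplit
  rw [eq_sub_of_add_eq hsplit]
  exact N.sub_mem hx (N.sum_mem fun j' hj' => h j' (Finset.ne_of_mem_erase hj'))

def blockTrace (R : Submodule K (ι × κ → K)) (S : Set (ι × κ)) (j : ι) :
    Submodule K (κ → K) :=
  (R ⊔ LinearMap.ker (LinearMap.funLeft K K ((↑) : S → ι × κ))).comap (blockSingle j)

variable {R : Submodule K (ι × κ → K)} {S : Set (ι × κ)} {j : ι}

theorem mem_blockTrace_iff {v : κ → K} :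
    v ∈ blockTrace R S j ↔ ∃ g ∈ R, ∀ q ∈ S, g q = blockSingle j v q := by
  simp only [blockTrace, Submodule.mem_comap, Submodule.mem_sup, LinearMap.mem_ker]
  constructor
  · rintro ⟨g, hg, z, hz, hgz⟩
    refine ⟨g, hg, fun q hq => ?_⟩
    rw [← hgz, Pi.add_apply, show z q = 0 from congrFun hz ⟨q, hq⟩, add_zero]
  · rintro ⟨g, hg, hgS⟩
    refine ⟨g, hg, blockSingle j v - g, ?_, add_sub_cancel g _⟩
    ext ⟨q, hq⟩
    simp [LinearMap.funLeft_apply, hgS q hq]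

theorem mem_blockTrace_of_forall_ne [Fintype ι] {x : ι × κ → K} (hx : x ∈ R)
    (h : ∀ j' ≠ j, (fun f => x (j', f)) ∈ blockTrace R S j') :
    (fun f => x (j, f)) ∈ blockTrace R S j :=
  blockSingle_mem_of_forall_ne (Submodule.mem_sup_left hx) h

theorem mem_blockTrace_of_forall_mem_eq_zero {v : κ → K} (hv : ∀ f, (j, f) ∈ S → v f = 0) :
    v ∈ blockTrace R S j := by
  refine Submodule.mem_sup_right (LinearMap.mem_ker.mpr ?_)
  ext ⟨⟨j', f⟩, hq⟩
  by_cases hj : j' = j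
  · subst hj
    simp [LinearMap.funLeft_apply, blockSingle_apply, hv f hq]
  · simp [LinearMap.funLeft_apply, blockSingle_apply, Pi.single_eq_of_ne hj]

theorem exists_support_inter_eq_singleton [Nontrivial K] [DecidableEq κ] {f₀ : κ}
    (h : Pi.single f₀ 1 ∈ blockTrace R S j) (hf₀ : (j, f₀) ∈ S) :
    ∃ g ∈ R, {q | g q ≠ 0} ∩ S = {(j, f₀)} := by
  obtain ⟨g, hg, hgS⟩ := mem_blockTrace_iff.mp h
  refine ⟨g, hg, Set.eq_singleton_iff_unique_mem.mpr ⟨⟨?_, hf₀⟩, ?_⟩⟩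
  · simp [hgS _ hf₀, blockSingle_apply]
  · rintro ⟨j', f⟩ ⟨hne, hq⟩
    rw [Set.mem_ofPred_eq, hgS _ hq, blockSingle_apply] at hne
    by_cases hj : j' = j
    · subst hj
      by_cases hf : f = f₀
      · rw [hf]
      · simp [Pi.single_eq_of_ne hf] at hne
    · simp [Pi.single_eq_of_ne hj] at hne

end BlockTrace

section StoppingSets

variable {ρ J : Type*}

theorem IsStoppingSet.support_inter_ne_singleton {H : Matrix ρ J (ZMod 2)} {S : Set J}
    (hS : IsStoppingSet H S) (r : ρ) (p : J) : {j | H r j ≠ 0} ∩ S ≠ {p} := by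
  intro h
  obtain ⟨⟨hp, hpS⟩, huniq⟩ := Set.eq_singleton_iff_unique_mem.mp h
  exact hS r ⟨p, ⟨hpS, hp⟩, fun q ⟨hqS, hq⟩ => huniq q ⟨hq, hqS⟩⟩

theorem Submodule.mem_of_forall_ne_mem_triple {K M : Type*} [Ring K] [AddCommGroup M] [Module K M]
    (L : Submodule K M) {x y z : M} (hx : x ≠ 0) (hy : y ≠ 0) (hxy : x ≠ y)
    (hz : z = x ∨ z = y ∨ z = x + y)
    (h : ∀ w, (w = x ∨ w = y ∨ w = x + y) → w ≠ z → w ∈ L) : z ∈ L := by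
  rcases hz with rfl | rfl | rfl
  · exact (L.add_mem_iff_left (h y (by simp) hxy.symm)).mp
      (h (z + y) (by simp) (add_eq_left.not.mpr hy))
  · exact (L.add_mem_iff_right (h x (by simp) hxy)).mp
      (h (x + z) (by simp) (add_eq_right.not.mpr hx))
  · exact L.add_mem (h x (by simp) fun e => hy (add_eq_left.mp e.symm))
      (h y (by simp) fun e => hx (add_eq_right.mp e.symm))

variable {ι κ : Type*}

def columnsOutside {K : Type*} [CommRing K] (L : ι → Submodule K (κ → K)) :
    Set (ι × {v : κ → K // v ≠ 0}) :=
  {p | (p.2 : κ → K) ∉ L p.1}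

theorem columnsOutside_blockTrace_inter_eq_image {K : Type*} [CommRing K] [Nontrivial K]
    [DecidableEq ι] [DecidableEq κ] {R : Submodule K (ι × κ → K)} {S : Set (ι × κ)}
    (hR : ∀ g ∈ R, ∀ p ∈ S, {q | g q ≠ 0} ∩ S ≠ {p})
    (u : κ → {v : κ → K // v ≠ 0}) (hu : ∀ e, (u e : κ → K) = Pi.single e 1) :
    columnsOutside (blockTrace R S) ∩ {p | ∃ e, p.2 = u e} = (fun q => (q.1, u q.2)) '' S := by
  ext ⟨j, c⟩
  simp only [columnsOutside, Set.mem_inter_iff, Set.mem_ofPred_eq, Set.mem_image, Prod.mk.injEq]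
  constructor
  · rintro ⟨hc, e, rfl⟩
    refine ⟨(j, e), ?_, rfl, rfl⟩
    by_contra he
    refine hc (mem_blockTrace_of_forall_mem_eq_zero fun f hf => ?_)
    rw [hu, Pi.single_eq_of_ne]
    rintro rfl
    exact he hf
  · rintro ⟨⟨j, e⟩, he, rfl, rfl⟩
    refine ⟨fun hL => ?_, e, rfl⟩
    rw [hu] at hL
    obtain ⟨g, hg, hsupp⟩ := exists_support_inter_eq_singleton hL he
    exact hR g hg _ he hsupp

theorem not_existsUnique_columnsOutside_of_simplex_row (L : ι → Submodule (ZMod 2) (κ → ZMod 2))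
    {H : Matrix ρ (ι × {v : κ → ZMod 2 // v ≠ 0}) (ZMod 2)} {r : ρ} {j₀ : ι}
    {c₁ c₂ : {v : κ → ZMod 2 // v ≠ 0}}
    (hH : ∀ j c, H r (j, c) = 1 ↔ j = j₀ ∧ c₁ ≠ c₂ ∧ (c₁ : κ → ZMod 2) + c₂ ≠ 0 ∧
      (c = c₁ ∨ c = c₂ ∨ (c : κ → ZMod 2) = c₁ + c₂)) :
    ¬ ∃! p, p ∈ columnsOutside L ∧ H r p ≠ 0 := by
  rintro ⟨⟨j, c⟩, ⟨hc, hne⟩, huniq⟩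
  obtain ⟨rfl, h12, hsum, hcases⟩ := (hH j c).mp (Fin.eq_one_of_ne_zero _ hne)
  refine hc ((L j).mem_of_forall_ne_mem_triple c₁.2 c₂.2 (Subtype.coe_ne_coe.mpr h12)
    (by rcases hcases with rfl | rfl | h <;> simp [*]) fun w hw hwc => ?_)
  have hw0 : w ≠ 0 := by
    rcases hw with rfl | rfl | rfl
    exacts [c₁.2, c₂.2, hsum]
  by_contra hwL
  have hcol : H r (j, ⟨w, hw0⟩) = 1 :=
    (hH _ _).mpr ⟨rfl, h12, hsum, by rcases hw with rfl | rfl | rfl <;> simp⟩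
  exact hwc (congrArg (fun p => (p.2 : κ → ZMod 2))
    (huniq (j, ⟨w, hw0⟩) ⟨hwL, hcol ▸ one_ne_zero⟩))

theorem not_existsUnique_columnsOutside_of_graph_row [Fintype ι] [DecidableEq ι]
    (R : Submodule (ZMod 2) (ι × κ → ZMod 2)) (S : Set (ι × κ))
    {H : Matrix ρ (ι × {v : κ → ZMod 2 // v ≠ 0}) (ZMod 2)} {r : ρ} (A : ι → Prop)
    (w : ι → κ → ZMod 2) (hwR : (fun q => w q.1 q.2) ∈ R) (hwA : ∀ j, w j ≠ 0 → A j)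
    (hH : ∀ j c, H r (j, c) = 1 ↔ A j ∧ (c : κ → ZMod 2) = w j) :
    ¬ ∃! p, p ∈ columnsOutside (blockTrace R S) ∧ H r p ≠ 0 := by
  rintro ⟨⟨j, c⟩, ⟨hc, hne⟩, huniq⟩
  obtain ⟨-, hcw⟩ := (hH j c).mp (Fin.eq_one_of_ne_zero _ hne)
  refine hc (hcw ▸ mem_blockTrace_of_forall_ne hwR fun j' hj' => ?_)
  show w j' ∈ blockTrace R S j'
  by_cases hw0 : w j' = 0
  · exact hw0 ▸ Submodule.zero_mem _
  by_contra hwL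
  have hcol : H r (j', ⟨w j', hw0⟩) = 1 := (hH _ _).mpr ⟨hwA j' hw0, rfl⟩
  exact hj' (congrArg Prod.fst (huniq (j', ⟨w j', hw0⟩) ⟨hwL, hcol ▸ one_ne_zero⟩))

end StoppingSets

theorem Matrix.eq_zero_of_mulVec_linearEquiv_eq_mul {F E n : Type*} [CommSemiring F] [Semiring E]
    [Module F E] [Fintype n] [DecidableEq n] (Φ : E ≃ₗ[F] (n → F)) (Ψ : E → Matrix n n F)
    (hΨ : ∀ h x, Ψ h *ᵥ Φ x = Φ (h * x)) : Ψ 0 = 0 :=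
  Matrix.ext_of_mulVec_single fun i => by
    rw [zero_mulVec]
    simpa using hΨ 0 (Φ.symm (Pi.single i 1))

theorem blockRow_transpose_mulVec_mem_span {K ρ ι κ κ' : Type*} [CommRing K] [Fintype κ]
    (M : Matrix (ρ × κ) (ι × κ') K) (B : ρ → ι → Matrix κ κ' K)
    (hM : ∀ i e j f, M (i, e) (j, f) = B i j e f) (i : ρ) (c : κ → K) :
    (fun q => ((B i q.1)ᵀ *ᵥ c) q.2) ∈ Submodule.span K (Set.range M) := by
  have hsum : (fun q => ((B i q.1)ᵀ *ᵥ c) q.2) = ∑ e, c e • M (i, e) := by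
    ext ⟨j, f⟩
    simp [Finset.sum_apply, mulVec, dotProduct, hM, mul_comm]
  rw [hsum]
  exact Submodule.sum_mem _ fun e _ =>
    Submodule.smul_mem _ _ (Submodule.subset_span ⟨(i, e), rfl⟩)

theorem rpc_removes_stopping_set_general (b m n : ℕ)
    (ΦB : GaloisField 2 b ≃ₗ[ZMod 2] (Fin b → ZMod 2))
    (Ψm : GaloisField 2 b → Matrix (Fin b) (Fin b) (ZMod 2))
    (hΨm : ∀ (h x : GaloisField 2 b), Ψm h *ᵥ ΦB x = ΦB (h * x))
    (Hq : Matrix (Fin m) (Fin n) (GaloisField 2 b))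
    (HB : Matrix (Fin m × Fin b) (Fin n × Fin b) (ZMod 2))
    (hHB : ∀ (i : Fin m) (e : Fin b) (j : Fin n) (f : Fin b),
      HB (i, e) (j, f) = Ψm (Hq i j) e f)
    (HE : Matrix
      ((Fin m × {v : Fin b → ZMod 2 // v ≠ 0}) ⊕
        (Fin n × {v : Fin b → ZMod 2 // v ≠ 0} × {v : Fin b → ZMod 2 // v ≠ 0}))
      (Fin n × {v : Fin b → ZMod 2 // v ≠ 0}) (ZMod 2))
    (hHPM : ∀ (i : Fin m) (c : {v : Fin b → ZMod 2 // v ≠ 0}) (j : Fin n)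
        (c' : {v : Fin b → ZMod 2 // v ≠ 0}),
      HE (Sum.inl (i, c)) (j, c') = 1 ↔
        (Hq i j ≠ 0 ∧
          (c' : Fin b → ZMod 2) = (Ψm (Hq i j))ᵀ *ᵥ (c : Fin b → ZMod 2)))
    (hHS : ∀ (j₀ : Fin n) (c₁ c₂ : {v : Fin b → ZMod 2 // v ≠ 0}) (j : Fin n)
        (c' : {v : Fin b → ZMod 2 // v ≠ 0}),
      HE (Sum.inr (j₀, c₁, c₂)) (j, c') = 1 ↔
        (j = j₀ ∧ c₁ ≠ c₂ ∧ (c₁ : Fin b → ZMod 2) + (c₂ : Fin b → ZMod 2) ≠ 0 ∧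
          (c' = c₁ ∨ c' = c₂ ∨
            (c' : Fin b → ZMod 2) = (c₁ : Fin b → ZMod 2) + (c₂ : Fin b → ZMod 2))))
    (u : Fin b → {v : Fin b → ZMod 2 // v ≠ 0})
    (hu : ∀ e : Fin b, (u e : Fin b → ZMod 2) = Pi.single e 1)
    (It : Set (Fin n × {v : Fin b → ZMod 2 // v ≠ 0}))
    (hIt : It = {p | ∃ e : Fin b, p.2 = u e})
    (S : Set (Fin n × Fin b))
    (hSE : ¬ ∃ T, IsStoppingSet HE T ∧
      T ∩ It = (fun q : Fin n × Fin b => (q.1, u q.2)) '' S) :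
    ∃ hS' ∈ Submodule.span (ZMod 2)
        (Set.range (fun r => HB r : (Fin m × Fin b) → (Fin n × Fin b) → ZMod 2)),
      (∃ p ∈ S, {q : Fin n × Fin b | hS' q ≠ 0} ∩ S = {p}) ∧
      ¬ IsStoppingSet
          (Matrix.of (Sum.elim (fun r => HB r) (fun _ : Unit => hS'))) S := by
  classical
  set R := Submodule.span (ZMod 2)
    (Set.range (fun r => HB r : (Fin m × Fin b) → (Fin n × Fin b) → ZMod 2))
  obtain ⟨h, hR, p, hpS, hsupp⟩ : ∃ h ∈ R, ∃ p ∈ S, {q | h q ≠ 0} ∩ S = {p} := by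
    by_contra! hR
    have hΨ0 : Ψm 0 = 0 := Matrix.eq_zero_of_mulVec_linearEquiv_eq_mul ΦB Ψm hΨm
    refine hSE ⟨columnsOutside (blockTrace R S), ?_,
      hIt ▸ columnsOutside_blockTrace_inter_eq_image hR u hu⟩
    rintro (⟨i, c⟩ | ⟨j₀, c₁, c₂⟩)
    · refine not_existsUnique_columnsOutside_of_graph_row R S (fun j => Hq i j ≠ 0)
        (fun j => (Ψm (Hq i j))ᵀ *ᵥ c) (blockRow_transpose_mulVec_mem_span HB _ hHB i c)
        (fun j hw hq => hw ?_) (hHPM i c)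
      simp [hq, hΨ0]
    · exact not_existsUnique_columnsOutside_of_simplex_row _ (hHS j₀ c₁ c₂)
  refine ⟨h, hR, ⟨p, hpS, hsupp⟩, fun hst => hst.support_inter_ne_singleton (Sum.inr ()) p ?_⟩
  simpa using hsupp

/-- **Proposition 2.** If `S` is a stopping set of `H_B` and there is no
stopping set `T` of `H_E` with `T ∩ I_t = {(j, u_e) : (j, e) ∈ S}` (i.e. `S ∈ 𝕊_B \ 𝕊_E`),
then the `ZMod 2`-row space of `H_B` contains a vector `h_S` whose support meets `S` in
exactly one element; consequently `S` is not a stopping set of the matrix obtained by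
adjoining the redundant parity check `h_S` to `H_B` as an extra row. -/
theorem rpc_removes_stopping_set (b m n : ℕ) (hb : 1 ≤ b)
    (ΦB : GaloisField 2 b ≃ₗ[ZMod 2] (Fin b → ZMod 2))
    (Ψm : GaloisField 2 b → Matrix (Fin b) (Fin b) (ZMod 2))
    (hΨm : ∀ (h x : GaloisField 2 b), Ψm h *ᵥ ΦB x = ΦB (h * x))
    (Hq : Matrix (Fin m) (Fin n) (GaloisField 2 b))
    (HB : Matrix (Fin m × Fin b) (Fin n × Fin b) (ZMod 2))
    (hHB : ∀ (i : Fin m) (e : Fin b) (j : Fin n) (f : Fin b),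
      HB (i, e) (j, f) = Ψm (Hq i j) e f)
    (HE : Matrix
      ((Fin m × {v : Fin b → ZMod 2 // v ≠ 0}) ⊕
        (Fin n × {v : Fin b → ZMod 2 // v ≠ 0} × {v : Fin b → ZMod 2 // v ≠ 0}))
      (Fin n × {v : Fin b → ZMod 2 // v ≠ 0}) (ZMod 2))
    (hHPM : ∀ (i : Fin m) (c : {v : Fin b → ZMod 2 // v ≠ 0}) (j : Fin n)
        (c' : {v : Fin b → ZMod 2 // v ≠ 0}),
      HE (Sum.inl (i, c)) (j, c') = 1 ↔
        (Hq i j ≠ 0 ∧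
          (c' : Fin b → ZMod 2) = (Ψm (Hq i j))ᵀ *ᵥ (c : Fin b → ZMod 2)))
    (hHS : ∀ (j₀ : Fin n) (c₁ c₂ : {v : Fin b → ZMod 2 // v ≠ 0}) (j : Fin n)
        (c' : {v : Fin b → ZMod 2 // v ≠ 0}),
      HE (Sum.inr (j₀, c₁, c₂)) (j, c') = 1 ↔
        (j = j₀ ∧ c₁ ≠ c₂ ∧ (c₁ : Fin b → ZMod 2) + (c₂ : Fin b → ZMod 2) ≠ 0 ∧
          (c' = c₁ ∨ c' = c₂ ∨
            (c' : Fin b → ZMod 2) = (c₁ : Fin b → ZMod 2) + (c₂ : Fin b → ZMod 2))))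
    (u : Fin b → {v : Fin b → ZMod 2 // v ≠ 0})
    (hu : ∀ e : Fin b, (u e : Fin b → ZMod 2) = Pi.single e 1)
    (It : Set (Fin n × {v : Fin b → ZMod 2 // v ≠ 0}))
    (hIt : It = {p | ∃ e : Fin b, p.2 = u e})
    (S : Set (Fin n × Fin b)) (hS : IsStoppingSet HB S)
    (hSE : ¬ ∃ T, IsStoppingSet HE T ∧
      T ∩ It = (fun q : Fin n × Fin b => (q.1, u q.2)) '' S) :
    ∃ hS' ∈ Submodule.span (ZMod 2)
        (Set.range (fun r => HB r : (Fin m × Fin b) → (Fin n × Fin b) → ZMod 2)),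
      (∃ p ∈ S, {q : Fin n × Fin b | hS' q ≠ 0} ∩ S = {p}) ∧
      ¬ IsStoppingSet
          (Matrix.of (Sum.elim (fun r => HB r) (fun _ : Unit => hS'))) S :=
  rpc_removes_stopping_set_general b m n ΦB Ψm hΨm Hq HB hHB HE hHPM hHS u hu It hIt S hSE
end
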